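/- arXiv:2605.22738 — 11 statements merged into one kernel-verified Lean document; each statement's English description precedes it below -/
import Mathlib

section
/- Let N = {1,…,n} and let q_t^s(n) be Möbius weights for s ≤ t ≤ n. Define the Möbius-form interaction index of a game ν : 2^N → ℝ at S ⊆ N as φ_S(ν) := ∑_{T ⊇ S} q_{|T|}^{|S|}(n) m_T(ν). Let a tree-based proxy be ν_tree(T) := ∑_{j ∈ 𝓛} c_j · 1[R_j ⊆ T ⊆ N \ L_j], where 𝓛 is a finite index set of leaves, c_j ∈ ℝ, and L_j, R_j ⊆ N are disjoint. Then for every S ⊆ N, φ_S(ν_tree) = ∑_{j ∈ 𝓛 : S ⊆ L_j ∪ R_j} c_j · λ(|L_j|, |R_j|, |S ∩ L_j|, |S|), where λ(ℓ, r, u, s) := ∑_{i=0}^{ℓ−u} (−1)^{i+u} · C(ℓ−u, i) · q_{i+u+r}^{s}(n). -/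
open Finset

/-- Möbius transform of a game `ν` on `N = {1,…,n}` (players modeled as `Fin n`):
`m_T(ν) = ∑_{L ⊆ T} (−1)^{|T|−|L|} ν(L)`. -/
noncomputable def moebius {n : ℕ} (ν : Finset (Fin n) → ℝ) (T : Finset (Fin n)) : ℝ :=
  ∑ L ∈ T.powerset, (-1 : ℝ) ^ (T.card - L.card) * ν L

/-- Möbius-form interaction index with Möbius weights `q t s`:
`φ_S(ν) = ∑_{T ⊇ S} q_{|T|}^{|S|} m_T(ν)`. -/
noncomputable def moebiusIndex {n : ℕ} (q : ℕ → ℕ → ℝ) (ν : Finset (Fin n) → ℝ)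
    (S : Finset (Fin n)) : ℝ :=
  ∑ T ∈ univ.filter (fun T => S ⊆ T), q T.card S.card * moebius ν T

/-- Leaf weight `λ(ℓ, r, u, s) = ∑_{i=0}^{ℓ−u} (−1)^{i+u} C(ℓ−u, i) q_{i+u+r}^{s}`. -/
noncomputable def lam (q : ℕ → ℕ → ℝ) (ℓ r u s : ℕ) : ℝ :=
  ∑ i ∈ Finset.range (ℓ - u + 1),
    (-1 : ℝ) ^ (i + u) * (Nat.choose (ℓ - u) i : ℝ) * q (i + u + r) s

private lemma neg_one_pow_sub' (a b : ℕ) (h : b ≤ a) : (-1:ℝ)^(a-b) = (-1)^(a+b) := by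
  conv_rhs => rw [← Nat.sub_add_cancel h]
  rw [add_assoc, pow_add, ← two_mul, pow_mul]
  norm_num

private lemma alt_sum_real {α : Type*} [DecidableEq α] (D : Finset α) :
    ∑ B ∈ D.powerset, (-1:ℝ)^B.card = if D = ∅ then 1 else 0 := by
  have h := Finset.sum_powerset_neg_one_pow_card (x := D)
  calc ∑ B ∈ D.powerset, (-1:ℝ)^B.card
      = ((∑ B ∈ D.powerset, (-1:ℤ)^B.card : ℤ) : ℝ) := by push_cast; rfl
    _ = if D = ∅ then 1 else 0 := by rw [h]; split <;> norm_num

private lemma moebius_leaf {n : ℕ} (L R : Finset (Fin n)) (h : Disjoint L R)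
    (T : Finset (Fin n)) :
    moebius (fun A => if R ⊆ A ∧ A ⊆ univ \ L then (1:ℝ) else 0) T
      = if R ⊆ T ∧ T ⊆ R ∪ L then (-1:ℝ)^(T.card + R.card) else 0 := by
  classical
  unfold moebius
  simp only [mul_ite, mul_one, mul_zero, ← Finset.sum_filter]
  by_cases hRT : R ⊆ T
  · set D := (T \ L) \ R with hD
    have key : ∑ A ∈ T.powerset.filter (fun A => R ⊆ A ∧ A ⊆ univ \ L),
          (-1:ℝ)^(T.card - A.card)
        = ∑ B ∈ D.powerset, (-1:ℝ)^(T.card + R.card) * (-1:ℝ)^B.card := by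
      refine Finset.sum_nbij' (fun A => A \ R) (fun B => R ∪ B) ?_ ?_ ?_ ?_ ?_
      · intro A hA
        simp only [mem_filter, mem_powerset] at hA
        obtain ⟨hAT, hRA, hAL⟩ := hA
        rw [mem_powerset]
        intro a ha
        rw [mem_sdiff] at ha
        simp only [hD, mem_sdiff]
        refine ⟨⟨hAT ha.1, ?_⟩, ha.2⟩
        have := hAL ha.1
        simp only [mem_sdiff, mem_univ, true_and] at this
        exact this
      · intro B hB
        rw [mem_powerset] at hB
        simp only [mem_filter, mem_powerset]
        have hBD : ∀ a ∈ B, a ∈ T ∧ a ∉ L ∧ a ∉ R := by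
          intro a ha
          have := hB ha
          simp only [hD, mem_sdiff] at this
          exact ⟨this.1.1, this.1.2, this.2⟩
        refine ⟨union_subset hRT (fun a ha => (hBD a ha).1), subset_union_left, ?_⟩
        intro a ha
        simp only [mem_sdiff, mem_univ, true_and]
        rcases mem_union.1 ha with ha | ha
        · exact fun hL => (Finset.disjoint_left.1 h) hL ha
        · exact (hBD a ha).2.1
      · intro A hA
        simp only [mem_filter, mem_powerset] at hA
        exact union_sdiff_of_subset hA.2.1
      · intro B hB
        rw [mem_powerset] at hB
        refine union_sdiff_cancel_left ?_
        refine Finset.disjoint_left.2 fun a haR haB => ?_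
        have := hB haB
        simp only [hD, mem_sdiff] at this
        exact this.2 haR
      · intro A hA
        simp only [mem_filter, mem_powerset] at hA
        have hcard : (A \ R).card + R.card = A.card :=
          Finset.card_sdiff_add_card_eq_card hA.2.1
        have hle : A.card ≤ T.card := Finset.card_le_card hA.1
        rw [neg_one_pow_sub' _ _ hle, ← pow_add]
        congr 1
        show #T + #A = #T + #R + #(A \ R)
        omega
    rw [key, ← Finset.mul_sum, alt_sum_real]
    have hDiff : (D = ∅) ↔ T ⊆ R ∪ L := by
      rw [hD, Finset.sdiff_eq_empty_iff_subset]
      constructor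
      · intro h' a ha
        by_cases haL : a ∈ L
        · exact mem_union.2 (Or.inr haL)
        · exact mem_union.2 (Or.inl (h' (mem_sdiff.2 ⟨ha, haL⟩)))
      · intro h' a ha
        rw [mem_sdiff] at ha
        rcases mem_union.1 (h' ha.1) with hr | hl
        · exact hr
        · exact absurd hl ha.2
    by_cases hTRL : T ⊆ R ∪ L
    · rw [if_pos (hDiff.2 hTRL), if_pos ⟨hRT, hTRL⟩, mul_one]
    · rw [if_neg (fun hE => hTRL (hDiff.1 hE)), if_neg (fun hc => hTRL hc.2), mul_zero]
  · rw [Finset.filter_false_of_mem, Finset.sum_empty, if_neg (fun hc => hRT hc.1)]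
    intro A hA
    rw [mem_powerset] at hA
    exact fun hc => hRT (hc.1.trans hA)

private lemma leaf_index {n : ℕ} (q : ℕ → ℕ → ℝ) (L R S : Finset (Fin n))
    (h : Disjoint L R) :
    ∑ T ∈ univ.filter (fun T => S ⊆ T), q T.card S.card *
        (if R ⊆ T ∧ T ⊆ R ∪ L then (-1:ℝ)^(T.card + R.card) else 0)
      = if S ⊆ L ∪ R then lam q L.card R.card (S ∩ L).card S.card else 0 := by
  classical
  simp only [mul_ite, mul_zero, ← Finset.sum_filter, Finset.filter_filter]
  by_cases hS : S ⊆ L ∪ R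
  · rw [if_pos hS]
    set U := S ∩ L with hU
    set D := L \ S with hDdef
    have hUL : U ⊆ L := inter_subset_right
    have hDU : D = L \ U := by
      ext a
      simp only [hDdef, hU, mem_sdiff, mem_inter]
      tauto
    have hDcard : D.card = L.card - U.card := by
      rw [hDU, Finset.card_sdiff_of_subset hUL]
    have key : ∑ T ∈ univ.filter (fun T => S ⊆ T ∧ R ⊆ T ∧ T ⊆ R ∪ L),
          q T.card S.card * (-1:ℝ)^(T.card + R.card)
        = ∑ C ∈ D.powerset,
            (-1:ℝ)^(C.card + U.card) * q (C.card + U.card + R.card) S.card := by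
      refine Finset.sum_nbij' (fun T => T \ (R ∪ U)) (fun C => (R ∪ U) ∪ C) ?_ ?_ ?_ ?_ ?_
      · intro T hT
        simp only [mem_filter, mem_univ, true_and] at hT
        obtain ⟨hST, hRT, hTRL⟩ := hT
        rw [mem_powerset]
        intro a ha
        simp only [mem_sdiff, mem_union] at ha
        obtain ⟨haT, haRU⟩ := ha
        push_neg at haRU
        have haL : a ∈ L := by
          rcases mem_union.1 (hTRL haT) with hr | hl
          · exact absurd hr haRU.1
          · exact hl
        simp only [hDdef, mem_sdiff]
        refine ⟨haL, fun haS => haRU.2 ?_⟩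
        simp [hU, haS, haL]
      · intro C hC
        rw [mem_powerset] at hC
        simp only [mem_filter, mem_univ, true_and]
        have hCL : C ⊆ L := fun a ha => (mem_sdiff.1 (hC ha)).1
        refine ⟨?_, subset_union_left.trans subset_union_left, ?_⟩
        · intro a haS
          rcases mem_union.1 (hS haS) with hl | hr
          · exact mem_union.2 (Or.inl (mem_union.2 (Or.inr (by simp [hU, haS, hl]))))
          · exact mem_union.2 (Or.inl (mem_union.2 (Or.inl hr)))
        · intro a ha
          rcases mem_union.1 ha with ha | ha
          · rcases mem_union.1 ha with ha | ha
            · exact mem_union.2 (Or.inl ha)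
            · exact mem_union.2 (Or.inr (hUL ha))
          · exact mem_union.2 (Or.inr (hCL ha))
      · intro T hT
        simp only [mem_filter, mem_univ, true_and] at hT
        refine union_sdiff_of_subset (union_subset hT.2.1 ?_)
        exact fun a ha => hT.1 (mem_inter.1 ha).1
      · intro C hC
        rw [mem_powerset] at hC
        refine union_sdiff_cancel_left (Finset.disjoint_left.2 fun a haRU haC => ?_)
        have haD := hC haC
        simp only [hDdef, mem_sdiff] at haD
        rcases mem_union.1 haRU with hr | hu
        · exact (Finset.disjoint_left.1 h) haD.1 hr
        · exact haD.2 (mem_inter.1 hu).1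
      · intro T hT
        simp only [mem_filter, mem_univ, true_and] at hT
        obtain ⟨hST, hRT, hTRL⟩ := hT
        have hRUsub : R ∪ U ⊆ T :=
          union_subset hRT (fun a ha => hST (mem_inter.1 ha).1)
        have hRUdisj : Disjoint R U :=
          Finset.disjoint_left.2 fun a haR haU =>
            (Finset.disjoint_left.1 h) (mem_inter.1 haU).2 haR
        have hcard1 : (T \ (R ∪ U)).card + (R ∪ U).card = T.card :=
          Finset.card_sdiff_add_card_eq_card hRUsub
        have hcard2 : (R ∪ U).card = R.card + U.card :=
          Finset.card_union_of_disjoint hRUdisj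
        have hT' : T.card = (T \ (R ∪ U)).card + U.card + R.card := by omega
        rw [hT']
        rw [show (T \ (R ∪ U)).card + U.card + R.card + R.card
            = ((T \ (R ∪ U)).card + U.card) + 2 * R.card by ring]
        rw [pow_add, pow_mul]
        norm_num
        ring
    rw [key]
    have hps := Finset.sum_powerset_apply_card
      (f := fun m => (-1:ℝ)^(m + U.card) * q (m + U.card + R.card) S.card) (x := D)
    rw [hps, hDcard]
    unfold lam
    refine Finset.sum_congr rfl fun i _ => ?_
    rw [nsmul_eq_mul]
    ring
  · rw [if_neg hS, Finset.filter_false_of_mem, Finset.sum_empty]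
    intro T _
    rintro ⟨hST, _, hTRL⟩
    exact hS (hST.trans (hTRL.trans (by rw [union_comm])))

/-- Exact cardinal-probabilistic interaction extraction from a tree-based proxy. -/
theorem tree_interaction_extraction {n : ℕ} {ι : Type*} [Fintype ι]
    (q : ℕ → ℕ → ℝ) (c : ι → ℝ) (L R : ι → Finset (Fin n))
    (hdisj : ∀ j, Disjoint (L j) (R j))
    (νtree : Finset (Fin n) → ℝ)
    (hν : ∀ T, νtree T = ∑ j, c j * (if R j ⊆ T ∧ T ⊆ univ \ L j then (1 : ℝ) else 0))
    (S : Finset (Fin n)) :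
    moebiusIndex q νtree S
      = ∑ j ∈ univ.filter (fun j => S ⊆ L j ∪ R j),
          c j * lam q (L j).card (R j).card (S ∩ L j).card S.card := by
  classical
  have hlin : ∀ T, moebius νtree T
      = ∑ j, c j * moebius (fun A => if R j ⊆ A ∧ A ⊆ univ \ L j then (1:ℝ) else 0) T := by
    intro T
    unfold moebius
    simp only [hν, Finset.mul_sum]
    rw [Finset.sum_comm]
    refine Finset.sum_congr rfl fun j _ => ?_
    refine Finset.sum_congr rfl fun A _ => ?_
    ring
  unfold moebiusIndex
  simp only [hlin, Finset.mul_sum]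
  rw [Finset.sum_comm]
  have hj : ∀ j, ∑ T ∈ univ.filter (fun T => S ⊆ T),
        q T.card S.card * (c j
          * moebius (fun A => if R j ⊆ A ∧ A ⊆ univ \ L j then (1:ℝ) else 0) T)
      = c j * (if S ⊆ L j ∪ R j then
          lam q (L j).card (R j).card (S ∩ L j).card S.card else 0) := by
    intro j
    rw [← leaf_index q (L j) (R j) S (hdisj j), Finset.mul_sum]
    refine Finset.sum_congr rfl fun T _ => ?_
    rw [moebius_leaf (L j) (R j) (hdisj j) T]
    ring
  simp only [hj]
  rw [Finset.sum_filter]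
  refine Finset.sum_congr rfl fun j _ => ?_
  rw [mul_ite, mul_zero]
end

section
/- Let N = {1,…,n}, S ⊆ N with s := |S|, ν : 2^N → ℝ a game, p_t^s(n) interaction weights, and let T_1,…,T_m be i.i.d. random coalitions drawn from a probability distribution P on 2^N with P(T) > 0 for all T ⊆ N. Then the MSR estimator φ̂_S := (1/m) ∑_{i=1}^m ν(T_i) · (−1)^{s−|S∩T_i|} · p^s_{|T_i|−|S∩T_i|}(n) / P(T_i) has variance Var[φ̂_S] = (1/m) · ( ∑_{T ⊆ N} ν(T)² · (p^s_{|T|−|S∩T|}(n))² / P(T) − φ_S(ν)² ), where φ_S(ν) := ∑_{T ⊆ N\S} p_{|T|}^{s}(n) Δ_S ν(T). In particular, Var[φ̂_S] ≤ (‖ν‖_∞² / m) · Γ_S(P), where Γ_S(P) := ∑_{T ⊆ N} (p^s_{|T|−|S∩T|}(n))² / P(T) and ‖ν‖_∞ := max_{T ⊆ N} |ν(T)|. -/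
/-!
The estimator is the sample mean of `m` i.i.d. copies of the importance-weighted variable
`X(T) = ν(T) (−1)^{s−|S∩T|} p^s_{|T|−|S∩T|} / P(T)`. Splitting `T = (T \ S) ∪ (T ∩ S)` turns
`E[X] = ∑_T ν(T) (−1)^{s−|S∩T|} p^s_{|T|−|S∩T|}` into `∑_{T ⊆ N \ S} p^s_{|T|} Δ_S ν(T) = φ_S(ν)`,
while `E[X²] = ∑_T ν(T)² (p^s_{|T|−|S∩T|})² / P(T)`. Under product weights the centred copies
are uncorrelated, so the variance of their mean is `Var X / m`. The bound drops `−φ_S(ν)²` and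
uses `ν(T)² ≤ ‖ν‖_∞²`.
-/

open Finset

/-- Expectation of a function of `m` i.i.d. coalitions drawn from the distribution `P`
on `2^N` (players modeled as `Fin n`): the joint sample space is `Fin m → Finset (Fin n)`
with product weights. -/
noncomputable def expec {n m : ℕ} (P : Finset (Fin n) → ℝ)
    (f : (Fin m → Finset (Fin n)) → ℝ) : ℝ :=
  ∑ ω : Fin m → Finset (Fin n), (∏ i, P (ω i)) * f ω

/-- Variance of a function of `m` i.i.d. coalitions drawn from `P`. -/
noncomputable def varFin {n m : ℕ} (P : Finset (Fin n) → ℝ)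
    (f : (Fin m → Finset (Fin n)) → ℝ) : ℝ :=
  expec P fun ω => (f ω - expec P f) ^ 2

/-- Discrete derivative `Δ_S ν(T) = ∑_{L ⊆ S} (−1)^{|S|−|L|} ν(T ∪ L)`. -/
noncomputable def discDeriv {n : ℕ} (ν : Finset (Fin n) → ℝ) (S T : Finset (Fin n)) : ℝ :=
  ∑ L ∈ S.powerset, (-1 : ℝ) ^ (S.card - L.card) * ν (T ∪ L)

/-- Cardinal-probabilistic interaction index
`φ_S(ν) = ∑_{T ⊆ N\S} p_{|T|}^{|S|} Δ_S ν(T)` with interaction weights `p t s`. -/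
noncomputable def interIdx {n : ℕ} (p : ℕ → ℕ → ℝ) (ν : Finset (Fin n) → ℝ)
    (S : Finset (Fin n)) : ℝ :=
  ∑ T ∈ (univ \ S).powerset, p T.card S.card * discDeriv ν S T

/-- The MSR estimator
`φ̂_S(ω) = (1/m) ∑_i ν(T_i) (−1)^{s−|S∩T_i|} p^s_{|T_i|−|S∩T_i|} / P(T_i)`. -/
noncomputable def msr {n : ℕ} (m : ℕ) (ν : Finset (Fin n) → ℝ) (p : ℕ → ℕ → ℝ)
    (S : Finset (Fin n)) (P : Finset (Fin n) → ℝ)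
    (ω : Fin m → Finset (Fin n)) : ℝ :=
  (1 / (m : ℝ)) * ∑ i, ν (ω i) * (-1 : ℝ) ^ (S.card - (S ∩ ω i).card)
      * p ((ω i).card - (S ∩ ω i).card) S.card / P (ω i)

/-- Sup norm `‖ν‖_∞ = max_{T ⊆ N} |ν(T)|`. -/
noncomputable def supNorm {n : ℕ} (ν : Finset (Fin n) → ℝ) : ℝ :=
  Finset.univ.sup' ⟨∅, Finset.mem_univ ∅⟩ fun T => |ν T|

section ProductWeights

variable {α : Type*} [Fintype α] {m : ℕ} (P : α → ℝ)

theorem sum_prod_mul_prod_eq_pow (hP : ∑ a, P a = 1) (h : α → ℝ) (s : Finset (Fin m)) :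
    ∑ ω : Fin m → α, (∏ k, P (ω k)) * ∏ k ∈ s, h (ω k) = (∑ a, P a * h a) ^ #s := by
  have factor : ∀ ω : Fin m → α, (∏ k, P (ω k)) * ∏ k ∈ s, h (ω k)
      = ∏ k, P (ω k) * (if k ∈ s then h (ω k) else 1) := fun ω => by
    rw [prod_mul_distrib, Fintype.prod_ite_mem]
  simp_rw [factor]
  rw [← Fintype.prod_sum fun k a => P a * if k ∈ s then h a else 1]
  have row : ∀ k, ∑ a, P a * (if k ∈ s then h a else 1)
      = if k ∈ s then ∑ a, P a * h a else 1 := fun k => by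
    split_ifs <;> simp [hP]
  simp_rw [row, Fintype.prod_ite_mem, prod_const]

theorem sum_prod_mul_apply (hP : ∑ a, P a = 1) (h : α → ℝ) (i : Fin m) :
    ∑ ω : Fin m → α, (∏ k, P (ω k)) * h (ω i) = ∑ a, P a * h a := by
  simpa using sum_prod_mul_prod_eq_pow P hP h {i}

theorem sum_prod_mul_apply_mul_apply (hP : ∑ a, P a = 1) (h : α → ℝ) {i j : Fin m}
    (hij : i ≠ j) :
    ∑ ω : Fin m → α, (∏ k, P (ω k)) * (h (ω i) * h (ω j)) = (∑ a, P a * h a) ^ 2 := by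
  simpa [prod_pair hij, card_pair hij] using sum_prod_mul_prod_eq_pow P hP h {i, j}

theorem sum_prod_mul_sum_sq_of_centered (hP : ∑ a, P a = 1) (h : α → ℝ)
    (hh : ∑ a, P a * h a = 0) :
    ∑ ω : Fin m → α, (∏ k, P (ω k)) * (∑ i, h (ω i)) ^ 2 = m * ∑ a, P a * h a ^ 2 := by
  have cross : ∀ i j : Fin m, ∑ ω : Fin m → α, (∏ k, P (ω k)) * (h (ω i) * h (ω j))
      = if i = j then ∑ a, P a * h a ^ 2 else 0 := fun i j => by
    split_ifs with hij
    · subst hij; simp_rw [← sq]; exact sum_prod_mul_apply P hP (fun a => h a ^ 2) i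
    · simp [sum_prod_mul_apply_mul_apply P hP h hij, hh]
  simp_rw [sq (∑ i, _), sum_mul_sum, mul_sum]
  rw [sum_comm]
  simp_rw [sum_comm (s := univ (α := Fin m → α)), cross, sum_ite_eq, if_pos (mem_univ _),
    sum_const, card_univ, Fintype.card_fin, nsmul_eq_mul, mul_sum]

end ProductWeights

theorem interIdx_eq_sum {n : ℕ} (p : ℕ → ℕ → ℝ) (ν : Finset (Fin n) → ℝ) (S : Finset (Fin n)) :
    interIdx p ν S = ∑ T, ν T * (-1 : ℝ) ^ (#S - #(S ∩ T)) * p (#T - #(S ∩ T)) #S := by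
  unfold interIdx discDeriv
  simp_rw [mul_sum]
  rw [← sum_product']
  refine sum_nbij' (fun q => q.1 ∪ q.2) (fun T => (T \ S, S ∩ T)) (by simp) ?_ ?_ ?_ ?_
  · intro T _
    simp only [mem_product, mem_powerset]
    exact ⟨sdiff_subset_sdiff (subset_univ T) le_rfl, inter_subset_left⟩
  · rintro ⟨T, L⟩ hTL
    simp only [mem_product, mem_powerset, subset_sdiff, subset_univ, true_and] at hTL
    ext x <;> simp <;> grind [disjoint_left]
  · intro T _
    simp only [inter_comm S, sdiff_union_inter]
  · rintro ⟨T, L⟩ hTL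
    simp only [mem_product, mem_powerset, subset_sdiff, subset_univ, true_and] at hTL
    have hST : S ∩ (T ∪ L) = L := by ext x; simp; grind [disjoint_left]
    rw [hST, card_union_of_disjoint (hTL.1.mono_right hTL.2), Nat.add_sub_cancel]
    ring

section SampleMean

variable {n m : ℕ} (P : Finset (Fin n) → ℝ)

theorem varFin_sampleMean (hP : ∑ T, P T = 1) (g : Finset (Fin n) → ℝ) :
    varFin P (fun ω : Fin m → Finset (Fin n) => (1 / (m : ℝ)) * ∑ i, g (ω i))
      = (1 / (m : ℝ)) * (∑ T, P T * g T ^ 2 - (∑ T, P T * g T) ^ 2) := by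
  generalize hμ : ∑ T, P T * g T = μ
  have hmean : expec P (fun ω : Fin m → Finset (Fin n) => (1 / (m : ℝ)) * ∑ i, g (ω i))
      = (1 / (m : ℝ)) * ∑ _i : Fin m, μ := by
    simp_rw [expec, mul_left_comm _ (1 / (m : ℝ))]
    rw [← mul_sum, ← hμ]
    congr 1
    simp_rw [mul_sum]
    rw [sum_comm]
    exact sum_congr rfl fun i _ => sum_prod_mul_apply P hP g i
  have centered : ∑ T, P T * (g T - μ) = 0 := by
    rw [← hμ]
    simp_rw [mul_sub, sum_sub_distrib, ← sum_mul, hP, one_mul, sub_self]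
  have spread : ∑ T, P T * (g T - μ) ^ 2 = ∑ T, P T * g T ^ 2 - μ ^ 2 := by
    have expand : ∀ T, P T * (g T - μ) ^ 2 = P T * g T ^ 2 - 2 * μ * (P T * g T) + μ ^ 2 * P T :=
      fun T => by ring
    simp_rw [expand, sum_add_distrib, sum_sub_distrib, ← mul_sum, hP, hμ]
    ring
  rw [varFin, hmean]
  simp_rw [expec, ← mul_sub, ← sum_sub_distrib, mul_pow, mul_left_comm _ ((1 / (m : ℝ)) ^ 2),
    ← mul_sum]
  rw [sum_prod_mul_sum_sq_of_centered P hP _ centered, spread, ← mul_assoc]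
  congr 1
  -- `(1 / m) ^ 2 * m = 1 / m` holds at `m = 0` too, both sides being `0`
  rcases eq_or_ne (m : ℝ) 0 with hm | hm
  · simp [hm]
  · field_simp

end SampleMean

section MSR

variable {n m : ℕ} (ν : Finset (Fin n) → ℝ) (p : ℕ → ℕ → ℝ) (S : Finset (Fin n))
  (P : Finset (Fin n) → ℝ)

noncomputable def msrTerm (T : Finset (Fin n)) : ℝ :=
  ν T * (-1 : ℝ) ^ (#S - #(S ∩ T)) * p (#T - #(S ∩ T)) #S / P T

theorem msr_eq_sampleMean :
    msr m ν p S P = fun ω => (1 / (m : ℝ)) * ∑ i, msrTerm ν p S P (ω i) := rfl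

variable {P}

theorem sum_mul_msrTerm (hP : ∀ T, P T ≠ 0) :
    ∑ T, P T * msrTerm ν p S P T = interIdx p ν S := by
  rw [interIdx_eq_sum]
  exact sum_congr rfl fun T _ => mul_div_cancel₀ _ (hP T)

theorem sum_mul_msrTerm_sq (hP : ∀ T, P T ≠ 0) :
    ∑ T, P T * msrTerm ν p S P T ^ 2 = ∑ T, ν T ^ 2 * p (#T - #(S ∩ T)) #S ^ 2 / P T := by
  refine sum_congr rfl fun T _ => ?_
  have hP := hP T
  rw [msrTerm]
  field_simp
  rw [← pow_mul, pow_mul', neg_one_sq, one_pow, mul_one]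

theorem varFin_msr (hP : ∀ T, P T ≠ 0) (hPsum : ∑ T, P T = 1) :
    varFin P (msr m ν p S P)
      = (1 / (m : ℝ)) * (∑ T, ν T ^ 2 * p (#T - #(S ∩ T)) #S ^ 2 / P T - interIdx p ν S ^ 2) := by
  rw [msr_eq_sampleMean, varFin_sampleMean P hPsum, sum_mul_msrTerm_sq ν p S hP,
    sum_mul_msrTerm ν p S hP]

end MSR

theorem sq_le_supNorm_sq {n : ℕ} (ν : Finset (Fin n) → ℝ) (T : Finset (Fin n)) :
    ν T ^ 2 ≤ supNorm ν ^ 2 := by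
  rw [← sq_abs]
  exact pow_le_pow_left₀ (abs_nonneg _) (le_sup' (fun T => |ν T|) (mem_univ T)) 2

theorem sum_sq_mul_le_supNorm_sq_mul {n : ℕ} (ν w : Finset (Fin n) → ℝ) (hw : ∀ T, 0 ≤ w T) :
    ∑ T, ν T ^ 2 * w T ≤ supNorm ν ^ 2 * ∑ T, w T := by
  rw [mul_sum]
  exact sum_le_sum fun T _ => mul_le_mul_of_nonneg_right (sq_le_supNorm_sq ν T) (hw T)

theorem msr_variance_identity_general {n m : ℕ}
    (S : Finset (Fin n)) (ν : Finset (Fin n) → ℝ) (p : ℕ → ℕ → ℝ)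
    (P : Finset (Fin n) → ℝ) (hPpos : ∀ T, 0 < P T)
    (hPsum : ∑ T : Finset (Fin n), P T = 1) :
    varFin P (msr m ν p S P)
        = (1 / (m : ℝ)) *
            ((∑ T : Finset (Fin n),
                ν T ^ 2 * (p (T.card - (S ∩ T).card) S.card) ^ 2 / P T)
              - interIdx p ν S ^ 2)
      ∧ varFin P (msr m ν p S P)
        ≤ (supNorm ν ^ 2 / (m : ℝ)) *
            ∑ T : Finset (Fin n), (p (T.card - (S ∩ T).card) S.card) ^ 2 / P T := by
  have hvar := varFin_msr ν p S (m := m) (fun T => (hPpos T).ne') hPsum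
  refine ⟨hvar, ?_⟩
  calc varFin P (msr m ν p S P)
      ≤ (1 / (m : ℝ)) * ∑ T, ν T ^ 2 * p (#T - #(S ∩ T)) #S ^ 2 / P T := by
        rw [hvar]
        gcongr
        exact sub_le_self _ (sq_nonneg _)
    _ ≤ (1 / (m : ℝ)) * (supNorm ν ^ 2 * ∑ T, p (#T - #(S ∩ T)) #S ^ 2 / P T) := by
        simp_rw [mul_div_assoc]
        gcongr
        exact sum_sq_mul_le_supNorm_sq_mul ν _ fun T => div_nonneg (sq_nonneg _) (hPpos T).le
    _ = _ := by ring

/-- General variance identity for the MSR estimator under an arbitrary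
positive sampling distribution, together with the `Γ_S(P)` upper bound. -/
theorem msr_variance_identity {n m : ℕ} (hm : 0 < m)
    (S : Finset (Fin n)) (ν : Finset (Fin n) → ℝ) (p : ℕ → ℕ → ℝ)
    (P : Finset (Fin n) → ℝ) (hPpos : ∀ T, 0 < P T)
    (hPsum : ∑ T : Finset (Fin n), P T = 1) :
    varFin P (msr m ν p S P)
        = (1 / (m : ℝ)) *
            ((∑ T : Finset (Fin n),
                ν T ^ 2 * (p (T.card - (S ∩ T).card) S.card) ^ 2 / P T)
              - interIdx p ν S ^ 2)
      ∧ varFin P (msr m ν p S P)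
        ≤ (supNorm ν ^ 2 / (m : ℝ)) *
            ∑ T : Finset (Fin n), (p (T.card - (S ∩ T).card) S.card) ^ 2 / P T :=
  msr_variance_identity_general S ν p P hPpos hPsum
end

section
/- Let N = {1,…,n}, S ⊆ N with s := |S|, ν : 2^N → ℝ a game, and p_t^s(n) interaction weights. Then the cardinal-probabilistic interaction index admits the full-sum representation φ_S(ν) = ∑_{T ⊆ N} ν(T) · (−1)^{s−|S∩T|} · p^s_{|T|−|S∩T|}(n); consequently, if T_1,…,T_m are i.i.d. from a distribution P on 2^N with P(T) > 0 for all T, the MSR estimator φ̂_S := (1/m) ∑_{i=1}^m ν(T_i) · (−1)^{s−|S∩T_i|} · p^s_{|T_i|−|S∩T_i|}(n) / P(T_i) is unbiased: E[φ̂_S] = φ_S(ν). -/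
open Finset

-- helper: expectation of a function of one coordinate of an i.i.d. sample
lemma sum_eval_coord {X : Type*} [Fintype X] [DecidableEq X] {m : ℕ} (P : X → ℝ)
    (hPsum : ∑ x, P x = 1) (g : X → ℝ) (i : Fin m) :
    ∑ ω : Fin m → X, (∏ j, P (ω j)) * g (ω i) = ∑ x, P x * g x := by
  rw [← (Equiv.funSplitAt i X).symm.sum_comp
      (fun ω => (∏ j, P (ω j)) * g (ω i))]
  rw [Fintype.sum_prod_type]
  have key : ∀ x : X, ∀ r : {j // j ≠ i} → X,
      (∏ j, P ((Equiv.funSplitAt i X).symm (x, r) j))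
        = P x * ∏ j : {j // j ≠ i}, P (r j) := by
    intro x r
    rw [Fintype.prod_eq_mul_prod_compl i]
    congr 1
    · simp
    · rw [Finset.prod_subtype ({i}ᶜ : Finset (Fin m))
        (fun j => by simp : ∀ j, j ∈ ({i}ᶜ : Finset (Fin m)) ↔ j ≠ i)
        (fun j => P ((Equiv.funSplitAt i X).symm (x, r) j))]
      apply Fintype.prod_congr
      intro j
      congr 1
      simp [Equiv.funSplitAt, Equiv.piSplitAt, j.2]
  have heval : ∀ x : X, ∀ r : {j // j ≠ i} → X,
      (Equiv.funSplitAt i X).symm (x, r) i = x := by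
    intro x r; simp
  calc ∑ x : X, ∑ r : {j // j ≠ i} → X,
        (∏ j, P ((Equiv.funSplitAt i X).symm (x, r) j))
          * g ((Equiv.funSplitAt i X).symm (x, r) i)
      = ∑ x : X, ∑ r : {j // j ≠ i} → X,
          (P x * g x) * ∏ j : {j // j ≠ i}, P (r j) := by
        refine Finset.sum_congr rfl fun x _ => Finset.sum_congr rfl fun r _ => ?_
        rw [key, heval]; ring
    _ = ∑ x : X, (P x * g x) * ∑ r : {j // j ≠ i} → X, ∏ j, P (r j) := by
        simp [Finset.mul_sum]
    _ = ∑ x : X, P x * g x := by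
        have : ∑ r : {j // j ≠ i} → X, ∏ j, P (r j)
            = ∏ _j : {j // j ≠ i}, ∑ x, P x := by
          rw [Finset.prod_univ_sum]
          rfl
        simp [this, hPsum]

/-- Full-sum representation of the cardinal-probabilistic interaction index and
unbiasedness of the MSR estimator. -/
theorem msr_unbiased {n m : ℕ} (hm : 0 < m)
    (S : Finset (Fin n)) (ν : Finset (Fin n) → ℝ) (p : ℕ → ℕ → ℝ)
    (P : Finset (Fin n) → ℝ) (hPpos : ∀ T, 0 < P T)
    (hPsum : ∑ T : Finset (Fin n), P T = 1) :
    interIdx p ν S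
        = ∑ T : Finset (Fin n),
            ν T * (-1 : ℝ) ^ (S.card - (S ∩ T).card)
              * p (T.card - (S ∩ T).card) S.card
      ∧ expec P (msr m ν p S P) = interIdx p ν S := by
  have key : interIdx p ν S
      = ∑ T : Finset (Fin n),
          ν T * (-1 : ℝ) ^ (S.card - (S ∩ T).card)
            * p (T.card - (S ∩ T).card) S.card := by
    unfold interIdx discDeriv
    simp_rw [Finset.mul_sum]
    rw [Finset.sum_sigma']
    apply Finset.sum_nbij' (fun x => x.1 ∪ x.2) (fun T => ⟨T \ S, T ∩ S⟩)
    · intro x hx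
      exact Finset.mem_univ _
    · intro T _
      simp only [Finset.mem_sigma, Finset.mem_powerset]
      exact ⟨fun a ha => by simp_all [Finset.mem_sdiff], Finset.inter_subset_right⟩
    · intro x hx
      simp only [Finset.mem_sigma, Finset.mem_powerset] at hx
      obtain ⟨h1, h2⟩ := hx
      have hd : Disjoint x.1 S := by
        rw [Finset.disjoint_left]
        intro a ha
        have := h1 ha
        simp [Finset.mem_sdiff] at this
        exact this
      have e1 : (x.1 ∪ x.2) \ S = x.1 := by
        rw [Finset.union_sdiff_distrib, Finset.sdiff_eq_self_of_disjoint hd,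
          Finset.sdiff_eq_empty_iff_subset.mpr h2, Finset.union_empty]
      have e2 : (x.1 ∪ x.2) ∩ S = x.2 := by
        rw [Finset.union_inter_distrib_right,
          Finset.disjoint_iff_inter_eq_empty.mp hd,
          Finset.inter_eq_left.mpr h2, Finset.empty_union]
      cases x
      simp_all
    · intro T _
      exact Finset.sdiff_union_inter T S
    · intro x hx
      simp only [Finset.mem_sigma, Finset.mem_powerset] at hx
      obtain ⟨h1, h2⟩ := hx
      have e2 : S ∩ (x.1 ∪ x.2) = x.2 := by
        rw [Finset.inter_union_distrib_left]
        have hd' : S ∩ x.1 = ∅ := by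
          rw [← Finset.disjoint_iff_inter_eq_empty, Finset.disjoint_left]
          intro a ha hb
          have := h1 hb
          simp [Finset.mem_sdiff] at this
          exact this ha
        rw [hd', Finset.inter_eq_right.mpr h2, Finset.empty_union]
      have hd : Disjoint x.1 x.2 := by
        rw [Finset.disjoint_left]
        intro a ha hb
        have := h1 ha
        simp [Finset.mem_sdiff] at this
        exact this (h2 hb)
      have ec : (x.1 ∪ x.2).card = x.1.card + x.2.card := Finset.card_union_of_disjoint hd
      rw [e2, ec, Nat.add_sub_cancel]
      ring
  refine ⟨key, ?_⟩
  set g : Finset (Fin n) → ℝ := fun T =>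
    ν T * (-1 : ℝ) ^ (S.card - (S ∩ T).card) * p (T.card - (S ∩ T).card) S.card / P T
    with hg
  have step1 : expec P (msr m ν p S P)
      = (1 / (m : ℝ)) * ∑ i : Fin m, ∑ ω : Fin m → Finset (Fin n),
          (∏ j, P (ω j)) * g (ω i) := by
    show (∑ ω : Fin m → Finset (Fin n),
        (∏ j, P (ω j)) * ((1 / (m : ℝ)) * ∑ i, g (ω i))) = _
    calc (∑ ω : Fin m → Finset (Fin n),
            (∏ j, P (ω j)) * ((1 / (m : ℝ)) * ∑ i, g (ω i)))
        = ∑ ω : Fin m → Finset (Fin n),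
            (1 / (m : ℝ)) * ∑ i, (∏ j, P (ω j)) * g (ω i) :=
          Finset.sum_congr rfl fun ω _ => by rw [mul_left_comm, Finset.mul_sum]
      _ = (1 / (m : ℝ)) * ∑ ω : Fin m → Finset (Fin n),
            ∑ i, (∏ j, P (ω j)) * g (ω i) := by rw [Finset.mul_sum]
      _ = (1 / (m : ℝ)) * ∑ i : Fin m, ∑ ω : Fin m → Finset (Fin n),
            (∏ j, P (ω j)) * g (ω i) := by rw [Finset.sum_comm]
  rw [step1]
  have step2 : ∀ i : Fin m,
      ∑ ω : Fin m → Finset (Fin n), (∏ j, P (ω j)) * g (ω i)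
        = ∑ T : Finset (Fin n), P T * g T :=
    fun i => sum_eval_coord P hPsum g i
  simp_rw [step2]
  have step3 : ∑ T : Finset (Fin n), P T * g T
      = ∑ T : Finset (Fin n),
          ν T * (-1 : ℝ) ^ (S.card - (S ∩ T).card) * p (T.card - (S ∩ T).card) S.card := by
    refine Finset.sum_congr rfl fun T _ => ?_
    rw [hg]
    field_simp [(hPpos T).ne']
  have hm' : (m : ℝ) ≠ 0 := Nat.cast_ne_zero.mpr hm.ne'
  rw [step3, key, Finset.sum_const, Finset.card_univ, Fintype.card_fin, nsmul_eq_mul]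
  field_simp
end

section
/- Let N = {1,…,n}, S ⊆ N with s := |S|, and let p_t^s(n) ≥ 0 be interaction weights normalized so that ∑_{T ⊆ N} p^s_{|T|−|S∩T|}(n) = 2^s (equivalently, ∑_{t=0}^{n−s} C(n−s, t) p_t^s(n) = 1). Suppose coalitions T_1,…,T_m are sampled i.i.d. proportionally to the interaction weights, i.e., P(T) = p^s_{|T|−|S∩T|}(n) / 2^s for all T ⊆ N, with P(T) > 0 for all T. Then the MSR estimator satisfies Var[φ̂_S] ≤ 4^s · ‖ν‖_∞² / m. -/
open Finset


section helpers
variable {n m : ℕ} (P : Finset (Fin n) → ℝ)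

lemma expec_pi (h : Fin m → Finset (Fin n) → ℝ) :
    expec P (fun ω => ∏ i, h i (ω i)) = ∏ i, ∑ T, P T * h i T := by
  unfold expec
  simp_rw [← Finset.prod_mul_distrib]
  rw [Finset.prod_univ_sum, Fintype.piFinset_univ]

lemma expec_congr {f g : (Fin m → Finset (Fin n)) → ℝ} (h : ∀ ω, f ω = g ω) :
    expec P f = expec P g := by
  unfold expec; exact Finset.sum_congr rfl fun ω _ => by rw [h]

lemma expec_const_mul (c : ℝ) (f : (Fin m → Finset (Fin n)) → ℝ) :
    expec P (fun ω => c * f ω) = c * expec P f := by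
  unfold expec; rw [Finset.mul_sum]
  exact Finset.sum_congr rfl fun ω _ => by ring

lemma expec_sum {ι : Type*} (s : Finset ι) (f : ι → (Fin m → Finset (Fin n)) → ℝ) :
    expec P (fun ω => ∑ i ∈ s, f i ω) = ∑ i ∈ s, expec P (f i) := by
  unfold expec
  simp_rw [Finset.mul_sum]
  rw [Finset.sum_comm]

lemma expec_single (hP1 : ∑ T, P T = 1) (i : Fin m) (a : Finset (Fin n) → ℝ) :
    expec P (fun ω => a (ω i)) = ∑ T, P T * a T := by
  have h1 : expec P (fun ω => ∏ k, (if k = i then a (ω k) else 1))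
      = ∏ k, ∑ T, P T * (if k = i then a T else 1) :=
    expec_pi P (fun k T => if k = i then a T else 1)
  have h2 : ∀ ω : Fin m → Finset (Fin n),
      (∏ k, (if k = i then a (ω k) else 1)) = a (ω i) := by
    intro ω
    rw [Finset.prod_eq_single i (fun k _ hk => by simp [hk]) (by simp)]
    simp
  have h3 : (∏ k, ∑ T, P T * (if k = i then a T else 1)) = ∑ T, P T * a T := by
    rw [Finset.prod_eq_single i (fun k _ hk => by simp [hk, hP1]) (by simp)]
    simp
  rw [← h3, ← h1]
  exact expec_congr P fun ω => (h2 ω).symm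

lemma expec_pair (hP1 : ∑ T, P T = 1) {i j : Fin m} (hij : i ≠ j)
    (a b : Finset (Fin n) → ℝ) :
    expec P (fun ω => a (ω i) * b (ω j))
      = (∑ T, P T * a T) * (∑ T, P T * b T) := by
  set h : Fin m → Finset (Fin n) → ℝ :=
    fun k T => if k = i then a T else if k = j then b T else 1 with hh
  have key : ∀ (c : Fin m → ℝ), (∀ k, k ≠ i → k ≠ j → c k = 1) →
      ∏ k, c k = c i * c j := by
    intro c hc
    have hjmem : j ∈ univ.erase i := by simp [hij.symm]
    rw [← Finset.mul_prod_erase univ c (mem_univ i),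
        ← Finset.mul_prod_erase _ c hjmem,
        Finset.prod_eq_one, mul_one]
    intro k hk
    simp only [Finset.mem_erase] at hk
    exact hc k hk.2.1 hk.1
  have h1 := expec_pi P h
  have h2 : ∀ ω : Fin m → Finset (Fin n),
      (∏ k, h k (ω k)) = a (ω i) * b (ω j) := by
    intro ω
    rw [key (fun k => h k (ω k)) (fun k hk1 hk2 => by simp [hh, hk1, hk2])]
    simp [hh, hij.symm]
  have h3 : (∏ k, ∑ T, P T * h k T) = (∑ T, P T * a T) * (∑ T, P T * b T) := by
    rw [key (fun k => ∑ T, P T * h k T) (fun k hk1 hk2 => by simp [hh, hk1, hk2, hP1])]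
    simp [hh, hij.symm]
  rw [← h3, ← h1]
  exact expec_congr P fun ω => (h2 ω).symm

end helpers


/-- Variance of the MSR estimator under sampling proportional to the interaction
weights: `Var[φ̂_S] ≤ 4^s ‖ν‖_∞² / m`. -/
theorem msr_variance_proportional {n m : ℕ} (hm : 0 < m)
    (S : Finset (Fin n)) (ν : Finset (Fin n) → ℝ) (p : ℕ → ℕ → ℝ)
    (hp : ∀ t, 0 ≤ p t S.card)
    (hnorm : ∑ T : Finset (Fin n),
        p (T.card - (S ∩ T).card) S.card = 2 ^ S.card)
    (P : Finset (Fin n) → ℝ)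
    (hPdef : ∀ T : Finset (Fin n),
        P T = p (T.card - (S ∩ T).card) S.card / 2 ^ S.card)
    (hPpos : ∀ T, 0 < P T) :
    varFin P (msr m ν p S P) ≤ 4 ^ S.card * supNorm ν ^ 2 / (m : ℝ) := by

  set s := S.card with hs
  set g : Finset (Fin n) → ℝ := fun T =>
    ν T * (-1 : ℝ) ^ (s - (S ∩ T).card) * p (T.card - (S ∩ T).card) s / P T with hg
  have h2pos : (0:ℝ) < 2 ^ s := by positivity
  have hP1 : ∑ T, P T = 1 := by
    simp_rw [hPdef, ← Finset.sum_div, hnorm]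
    field_simp
  set μ : ℝ := ∑ T, P T * g T with hμ
  set d : Finset (Fin n) → ℝ := fun T => g T - μ with hd
  have hm0 : (m : ℝ) ≠ 0 := Nat.cast_ne_zero.mpr hm.ne'
  -- g T squared
  have hppos : ∀ T : Finset (Fin n), 0 < p (T.card - (S ∩ T).card) s := by
    intro T
    have := hPpos T
    rw [hPdef] at this
    rcases div_pos_iff.mp this with ⟨h1, _⟩ | ⟨_, h2⟩
    · exact h1
    · linarith
  have hq : ∀ T : Finset (Fin n), p (T.card - (S ∩ T).card) s / P T = 2 ^ s := by
    intro T
    rw [hPdef]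
    rw [div_div_eq_mul_div, mul_comm, mul_div_assoc, div_self (hppos T).ne', mul_one]
  have hgsq : ∀ T, g T ^ 2 = ν T ^ 2 * 4 ^ s := by
    intro T
    have : g T = ν T * (-1 : ℝ) ^ (s - (S ∩ T).card) * 2 ^ s := by
      rw [hg]; simp only
      rw [mul_div_assoc, hq]
    rw [this, mul_pow, mul_pow, ← pow_mul, ← pow_mul,
        mul_comm (s - (S ∩ T).card) 2, mul_comm s 2, pow_mul, pow_mul]
    norm_num
  have hν2 : ∀ T, ν T ^ 2 ≤ supNorm ν ^ 2 := by
    intro T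
    have h1 : |ν T| ≤ supNorm ν := by
      unfold supNorm
      exact Finset.le_sup' (fun T => |ν T|) (mem_univ T)
    calc ν T ^ 2 = |ν T| ^ 2 := (sq_abs _).symm
    _ ≤ supNorm ν ^ 2 := pow_le_pow_left₀ (abs_nonneg _) h1 2
  -- E[msr] = μ
  have hmsr : ∀ ω : Fin m → Finset (Fin n),
      msr m ν p S P ω = (1 / (m:ℝ)) * ∑ i, g (ω i) := fun ω => rfl
  have hEmsr : expec P (msr m ν p S P) = μ := by
    rw [expec_congr P hmsr, expec_const_mul,
        expec_sum P univ (fun i ω => g (ω i))]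
    simp_rw [expec_single P hP1 _ g]
    rw [Finset.sum_const, card_univ, Fintype.card_fin, nsmul_eq_mul, ← hμ]
    field_simp
  set V : ℝ := ∑ T, P T * d T ^ 2 with hV
  have hdmean : ∑ T, P T * d T = 0 := by
    simp_rw [hd, mul_sub]
    rw [Finset.sum_sub_distrib, ← hμ, ← Finset.sum_mul, hP1]
    ring
  have hcross : ∀ i j : Fin m, expec P (fun ω => d (ω i) * d (ω j))
      = if i = j then V else 0 := by
    intro i j
    by_cases hij : i = j
    · subst hij
      simp only [if_pos rfl]
      have : expec P (fun ω => (fun T => d T * d T) (ω i)) = ∑ T, P T * (d T * d T) :=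
        expec_single P hP1 i (fun T => d T * d T)
      rw [this, hV]
      exact Finset.sum_congr rfl fun T _ => by ring
    · rw [if_neg hij, expec_pair P hP1 hij d d, hdmean, mul_zero]
  -- variance = V / m
  have hvar : varFin P (msr m ν p S P) = V / m := by
    unfold varFin
    rw [hEmsr]
    have step : ∀ ω : Fin m → Finset (Fin n),
        (msr m ν p S P ω - μ) ^ 2
          = (1 / (m:ℝ))^2 * ∑ i : Fin m, ∑ j : Fin m, d (ω i) * d (ω j) := by
      intro ω
      have h1 : msr m ν p S P ω - μ = (1 / (m:ℝ)) * ∑ i, d (ω i) := by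
        rw [hmsr]
        simp_rw [hd]
        rw [Finset.sum_sub_distrib, Finset.sum_const, card_univ, Fintype.card_fin,
            nsmul_eq_mul, mul_sub]
        field_simp
      rw [h1, mul_pow, pow_two (∑ i : Fin m, d (ω i)), Finset.sum_mul_sum]
    rw [expec_congr P step, expec_const_mul,
        expec_sum P univ (fun i ω => ∑ j, d (ω i) * d (ω j))]
    have : ∀ i : Fin m, expec P (fun ω => ∑ j, d (ω i) * d (ω j)) = V := by
      intro i
      rw [expec_sum P univ (fun j ω => d (ω i) * d (ω j))]
      simp_rw [hcross i]
      simp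
    simp_rw [this]
    rw [Finset.sum_const, card_univ, Fintype.card_fin, nsmul_eq_mul]
    field_simp
  rw [hvar]
  -- bound V
  have hVle : V ≤ 4 ^ s * supNorm ν ^ 2 := by
    have h1 : V = (∑ T, P T * g T ^ 2) - μ ^ 2 := by
      have : ∀ T : Finset (Fin n),
          P T * d T ^ 2 = P T * g T ^ 2 - 2 * μ * (P T * g T) + μ ^ 2 * P T := by
        intro T; rw [hd]; ring
      rw [hV, Finset.sum_congr rfl fun T _ => this T, Finset.sum_add_distrib,
          Finset.sum_sub_distrib, ← Finset.mul_sum, ← Finset.mul_sum, ← hμ, hP1]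
      ring
    have h2 : (∑ T, P T * g T ^ 2) ≤ 4 ^ s * supNorm ν ^ 2 := by
      calc (∑ T, P T * g T ^ 2)
          ≤ ∑ T : Finset (Fin n), P T * (supNorm ν ^ 2 * 4 ^ s) := by
            apply Finset.sum_le_sum
            intro T _
            apply mul_le_mul_of_nonneg_left _ (hPpos T).le
            rw [hgsq T]
            exact mul_le_mul_of_nonneg_right (hν2 T) (by positivity)
        _ = 4 ^ s * supNorm ν ^ 2 := by
            rw [← Finset.sum_mul, hP1]; ring
    nlinarith [sq_nonneg μ]
  exact (div_le_div_iff_of_pos_right (Nat.cast_pos.mpr hm)).mpr hVle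
end

section
/- Let N = {1,…,n}, S ⊆ N with s := |S|, 1 ≤ s ≤ n, let the Shapley interaction weights be p_t^s(n) := 1/((n−s+1) · C(n−s, t)), and let leverage sampling be P(T) := 1/((n+1) · C(n, |T|)). Then the variance factor Γ_S(P) := ∑_{T ⊆ N} (p^s_{|T|−|S∩T|}(n))² / P(T) satisfies the exact identity Γ_S(P) = ((n+1) · (n−s+1)_s / (n−s+1)²) · ∑_{r=0}^{s} C(s, r) · ∑_{q=0}^{n−s} 1 / ((q+1)_r · (n−s−q+1)_{s−r}), where (a)_k := a(a+1)⋯(a+k−1) denotes the rising factorial (with (a)_0 = 1). -/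
open Finset

/-- Rising factorial `(a)_k = a (a+1) ⋯ (a+k−1)`, with `(a)_0 = 1`. -/
def rf (a k : ℕ) : ℕ := ∏ i ∈ Finset.range k, (a + i)

/-- Shapley interaction weight `p_t^s(n) = 1/((n−s+1) C(n−s, t))`. -/
noncomputable def shapW (n s t : ℕ) : ℝ :=
  1 / (((n - s + 1 : ℕ) : ℝ) * (Nat.choose (n - s) t : ℝ))

/-- Leverage-sampling probability `P(T) = 1/((n+1) C(n, |T|))`. -/
noncomputable def lev (n : ℕ) (T : Finset (Fin n)) : ℝ :=
  1 / (((n + 1 : ℕ) : ℝ) * (Nat.choose n T.card : ℝ))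

lemma rf_pos' (a k : ℕ) : 0 < rf (a + 1) k :=
  Finset.prod_pos fun i _ => by omega

lemma rf_mul_factorial' (a k : ℕ) : rf (a + 1) k * a.factorial = (a + k).factorial := by
  induction k with
  | zero => simp [rf]
  | succ k ih =>
    have h : rf (a+1) (k+1) = rf (a+1) k * (a+1+k) := by
      unfold rf; rw [Finset.prod_range_succ]
    rw [h, show a + (k+1) = (a+k)+1 from by omega, Nat.factorial_succ, ← ih]
    ring

lemma key_nat' (n s r q : ℕ) (hsn : s ≤ n) (hr : r ≤ s) (hq : q ≤ n - s) :
    n.choose (r+q) * rf (q+1) r * rf (n-s-q+1) (s-r) = (n-s).choose q * rf (n-s+1) s := by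
  obtain ⟨m, rfl⟩ : ∃ m, n = m + s := ⟨n - s, by omega⟩
  rw [show m + s - s = m from by omega] at *
  have h1 : rf (q+1) r * q.factorial = (r+q).factorial := by
    rw [rf_mul_factorial', Nat.add_comm]
  have h2 : rf (m-q+1) (s-r) * (m-q).factorial = ((m-q)+(s-r)).factorial :=
    rf_mul_factorial' _ _
  have h3 : (m+s).choose (r+q) * (r+q).factorial * ((m-q)+(s-r)).factorial = (m+s).factorial := by
    rw [show (m-q)+(s-r) = (m+s)-(r+q) from by omega]
    exact Nat.choose_mul_factorial_mul_factorial (by omega)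
  have h4 : m.choose q * q.factorial * (m-q).factorial = m.factorial :=
    Nat.choose_mul_factorial_mul_factorial hq
  have h5 : rf (m+1) s * m.factorial = (m+s).factorial := rf_mul_factorial' _ _
  refine Nat.eq_of_mul_eq_mul_right
    (show 0 < q.factorial * (m-q).factorial * m.factorial by positivity) ?_
  zify at h1 h2 h3 h4 h5 ⊢
  linear_combination (((m+s).choose (r+q) : ℤ) * rf (m-q+1) (s-r) * (m-q).factorial * m.factorial) * h1
    + (((m+s).choose (r+q) : ℤ) * (r+q).factorial * m.factorial) * h2
    + (m.factorial : ℤ) * h3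
    - ((rf (m+1) s : ℤ) * m.factorial) * h4
    - (m.factorial : ℤ) * h5

lemma term_eq' (n s r q : ℕ) (hsn : s ≤ n) (hr : r ≤ s) (hq : q ≤ n - s) :
    (s.choose r : ℝ) * (((n-s).choose q : ℝ) *
        ((shapW n s q) ^ 2 * (((n+1:ℕ):ℝ) * (n.choose (r + q) : ℝ))))
    = (((n + 1 : ℕ) : ℝ) * (rf (n - s + 1) s : ℝ) / ((n - s + 1 : ℕ) : ℝ) ^ 2)
        * ((s.choose r : ℝ) * (1 / ((rf (q + 1) r : ℝ) * (rf (n - s - q + 1) (s - r) : ℝ)))) := by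
  have p1 : (0:ℝ) < rf (q+1) r := by exact_mod_cast rf_pos' q r
  have p2 : (0:ℝ) < rf (n-s-q+1) (s-r) := by exact_mod_cast rf_pos' (n-s-q) (s-r)
  have p3 : (0:ℝ) < (n-s).choose q := by exact_mod_cast Nat.choose_pos hq
  have p4 : (0:ℝ) < ((n-s+1:ℕ):ℝ) := by positivity
  have hkey : (n.choose (r+q) : ℝ)
      = (((n-s).choose q : ℝ) * (rf (n-s+1) s : ℝ))
          / ((rf (q+1) r : ℝ) * (rf (n-s-q+1) (s-r) : ℝ)) := by
    rw [eq_div_iff (by positivity), ← mul_assoc]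
    exact_mod_cast key_nat' n s r q hsn hr hq
  have alg : ∀ Cs Cq A N1 Z R1 R2 : ℝ, Cq ≠ 0 → A ≠ 0 → R1 * R2 ≠ 0 →
      Cs * (Cq * ((1/(A*Cq))^2 * (N1 * (Cq * Z / (R1*R2)))))
        = N1 * Z / A^2 * (Cs * (1/(R1*R2))) := by
    intro Cs Cq A N1 Z R1 R2 h1 h2 h3
    field_simp
  rw [hkey, shapW]
  exact alg _ _ _ _ _ _ _ (ne_of_gt p3) (ne_of_gt p4) (by positivity)

/-- Exact identity for the variance factor `Γ_S(P)` of the MSR estimator for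
the Shapley interaction index under leverage sampling. -/
theorem gamma_shapley_leverage_exact (n s : ℕ) (hs1 : 1 ≤ s) (hsn : s ≤ n)
    (S : Finset (Fin n)) (hS : S.card = s) :
    (∑ T : Finset (Fin n),
        (shapW n s (T.card - (S ∩ T).card)) ^ 2 / lev n T)
      = (((n + 1 : ℕ) : ℝ) * (rf (n - s + 1) s : ℝ) / ((n - s + 1 : ℕ) : ℝ) ^ 2)
          * ∑ r ∈ Finset.range (s + 1), (Nat.choose s r : ℝ)
              * ∑ q ∈ Finset.range (n - s + 1),
                  1 / ((rf (q + 1) r : ℝ) * (rf (n - s - q + 1) (s - r) : ℝ)) := by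
  classical
  have hcompl : Sᶜ.card = n - s := by
    rw [card_compl, hS]; simp
  have h1 : (∑ T : Finset (Fin n),
        (shapW n s (T.card - (S ∩ T).card)) ^ 2 / lev n T)
      = ∑ p ∈ S.powerset ×ˢ Sᶜ.powerset,
          (shapW n s p.2.card) ^ 2 * (((n+1:ℕ):ℝ) * (n.choose (p.1.card + p.2.card) : ℝ)) := by
    refine Finset.sum_nbij' (fun T => (T ∩ S, T \ S)) (fun p => p.1 ∪ p.2)
      ?_ ?_ ?_ ?_ ?_
    · intro T _
      simp only [mem_product, mem_powerset]
      exact ⟨inter_subset_right, fun x hx => by simp only [mem_sdiff] at hx; simp [hx.2]⟩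
    · intro p _; exact mem_univ _
    · intro T _
      dsimp only
      rw [Finset.union_comm, Finset.sdiff_union_inter]
    · intro p hp
      simp only [mem_product, mem_powerset] at hp
      have h1 : p.1 ∩ S = p.1 := inter_eq_left.2 hp.1
      have h2 : p.2 ∩ S = ∅ := by
        rw [← Finset.disjoint_iff_inter_eq_empty]
        exact Finset.disjoint_left.2 fun x hx => by
          have := hp.2 hx; simp at this; exact this
      have h3 : p.1 \ S = ∅ := by rw [Finset.sdiff_eq_empty_iff_subset]; exact hp.1
      have h4 : p.2 \ S = p.2 := by
        rw [Finset.sdiff_eq_self_iff_disjoint, Finset.disjoint_iff_inter_eq_empty]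
        exact h2
      have e1 : (p.1 ∪ p.2) ∩ S = p.1 := by
        rw [Finset.union_inter_distrib_right, h1, h2, Finset.union_empty]
      have e2 : (p.1 ∪ p.2) \ S = p.2 := by
        rw [Finset.union_sdiff_distrib, h3, h4, Finset.empty_union]
      rw [Prod.ext_iff]
      exact ⟨e1, e2⟩
    · intro T _
      have hc : (T ∩ S).card + (T \ S).card = T.card := Finset.card_inter_add_card_sdiff T S
      have hcc : T.card - (S ∩ T).card = (T \ S).card := by
        rw [Finset.inter_comm]; omega
      dsimp only
      rw [hcc, lev, div_eq_mul_inv, one_div, inv_inv, hc]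
  rw [h1, Finset.sum_product]
  have h2 : ∀ A ∈ S.powerset, (∑ B ∈ Sᶜ.powerset,
        (shapW n s B.card) ^ 2 * (((n+1:ℕ):ℝ) * (n.choose (A.card + B.card) : ℝ)))
      = ∑ q ∈ Finset.range (n - s + 1), ((n-s).choose q : ℝ) *
          ((shapW n s q) ^ 2 * (((n+1:ℕ):ℝ) * (n.choose (A.card + q) : ℝ))) := by
    intro A _
    rw [Finset.sum_powerset_apply_card
      (f := fun b => (shapW n s b) ^ 2 * (((n+1:ℕ):ℝ) * (n.choose (A.card + b) : ℝ))), hcompl]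
    simp [nsmul_eq_mul]
  rw [Finset.sum_congr rfl h2]
  rw [Finset.sum_powerset_apply_card
    (f := fun a => ∑ q ∈ Finset.range (n - s + 1), ((n-s).choose q : ℝ) *
          ((shapW n s q) ^ 2 * (((n+1:ℕ):ℝ) * (n.choose (a + q) : ℝ)))), hS]
  rw [Finset.mul_sum]
  refine Finset.sum_congr rfl fun r hr => ?_
  rw [smul_sum, Finset.mul_sum, Finset.mul_sum]
  refine Finset.sum_congr rfl fun q hq => ?_
  rw [nsmul_eq_mul]
  exact term_eq' n s r q hsn (by simpa [Nat.lt_succ_iff] using hr)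
    (by simpa [Nat.lt_succ_iff] using hq)
end

section
/- Let N = {1,…,n} with n ≥ 1, let S ⊆ N be a singleton (|S| = 1), let the Shapley interaction weights be p_t^1(n) := 1/(n · C(n−1, t)), and let leverage sampling be P(T) := 1/((n+1) · C(n, |T|)). Then the variance factor satisfies the exact identity Γ_S(P) = 2(n+1) · H_n / n, where H_n := ∑_{j=1}^{n} 1/j is the n-th harmonic number. -/
open Finset

/-- Shapley interaction weight for singletons: `p_t^1(n) = 1/(n · C(n−1, t))`. -/
noncomputable def shapW1 (n t : ℕ) : ℝ :=
  1 / ((n : ℝ) * (Nat.choose (n - 1) t : ℝ))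

/-! Fix `S = {i}` and write every `T` as `U` or `insert i U` with `i ∉ U`. Both summands then depend
on `t = #U` only, and by `(n - t) C(n, t) = (t + 1) C(n, t + 1) = n C(n - 1, t)` the `C(n - 1, t)`
sets `U` of size `t` contribute `(n + 1) / (n (n - t))` and `(n + 1) / (n (t + 1))` in total.
Summing over `t < n`, each of the two families gives `(n + 1) H_n / n`. -/

theorem Finset.sum_univ_finset_eq_sum_powerset_erase {α β : Type*} [Fintype α] [DecidableEq α]
    [AddCommMonoid β] (i : α) (g : Finset α → β) :
    ∑ T : Finset α, g T = ∑ U ∈ (univ.erase i).powerset, (g U + g (insert i U)) := by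
  conv_lhs => rw [← powerset_univ, ← insert_erase (mem_univ i)]
  rw [sum_powerset_insert (notMem_erase i univ), sum_add_distrib]

theorem Finset.card_sub_card_singleton_inter {α : Type*} [DecidableEq α] (i : α) (T : Finset α) :
    #T - #({i} ∩ T) = #(T.erase i) := by
  rw [← card_sdiff, sdiff_singleton_eq_erase]

theorem div_lev (n : ℕ) (T : Finset (Fin n)) (a : ℝ) :
    a / lev n T = a * ((n + 1 : ℕ) * n.choose #T) := by
  rw [lev, div_div_eq_mul_div, div_one]

theorem choose_mul_sq_shapW1_mul_add_choose {m t : ℕ} (ht : t ≤ m) :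
    (m.choose t : ℝ) * (shapW1 (m + 1) t ^ 2 *
        (((m + 1 + 1 : ℕ) : ℝ) * ((m + 1).choose t + (m + 1).choose (t + 1))))
      = (m + 2) / (m + 1) * (1 / ((m + 1 - t : ℕ) : ℝ) + 1 / (t + 1)) := by
  have hc : (m.choose t : ℝ) ≠ 0 := by exact_mod_cast (Nat.choose_pos ht).ne'
  have hsub : ((m + 1 - t : ℕ) : ℝ) ≠ 0 := by exact_mod_cast (by omega : m + 1 - t ≠ 0)
  have h₁ : ((m + 1).choose t : ℝ) * (m + 1 - t : ℕ) = m.choose t * (m + 1) := by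
    exact_mod_cast (Nat.choose_mul_succ_eq m t).symm
  have h₂ : ((m + 1).choose (t + 1) : ℝ) * (t + 1) = m.choose t * (m + 1) := by
    exact_mod_cast (Nat.add_one_mul_choose_eq m t).symm.trans (Nat.mul_comm _ _)
  rw [shapW1, Nat.add_sub_cancel, eq_div_of_mul_eq hsub h₁, eq_div_of_mul_eq (by positivity) h₂]
  push_cast
  field_simp
  ring

theorem sum_range_one_div_sub_eq (n : ℕ) :
    ∑ j ∈ range n, 1 / ((n - j : ℕ) : ℝ) = ∑ j ∈ range n, 1 / ((j : ℝ) + 1) := by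
  rw [← sum_range_reflect]
  refine sum_congr rfl fun j hj => ?_
  rw [show n - (n - 1 - j) = j + 1 by grind]
  push_cast
  rfl

/-- For a singleton `S` (|S| = 1), the variance factor under leverage sampling is
exactly `Γ_S(P) = 2(n+1) H_n / n`, where `H_n` is the n-th harmonic number. -/
theorem gamma_singleton_leverage (n : ℕ) (hn : 1 ≤ n)
    (S : Finset (Fin n)) (hS : S.card = 1) :
    (∑ T : Finset (Fin n),
        (shapW1 n (T.card - (S ∩ T).card)) ^ 2 / lev n T)
      = 2 * ((n : ℝ) + 1) * (∑ j ∈ Finset.range n, (1 : ℝ) / (j + 1)) / n := by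
  obtain ⟨i, rfl⟩ := card_eq_one.mp hS
  obtain ⟨m, rfl⟩ := Nat.exists_eq_add_of_le' hn
  simp only [card_sub_card_singleton_inter, div_lev]
  rw [sum_univ_finset_eq_sum_powerset_erase i]
  let F : ℕ → ℝ := fun t => shapW1 (m + 1) t ^ 2 *
    (((m + 1 + 1 : ℕ) : ℝ) * ((m + 1).choose t + (m + 1).choose (t + 1)))
  trans ∑ U ∈ (univ.erase i).powerset, F #U
  · refine sum_congr rfl fun U hU => ?_
    have hiU : i ∉ U := fun h => notMem_erase i univ (mem_powerset.mp hU h)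
    simp only [F, erase_insert hiU, erase_eq_of_notMem hiU, card_insert_of_notMem hiU]
    push_cast
    ring
  rw [sum_powerset_apply_card, card_erase_of_mem (mem_univ i), card_univ, Fintype.card_fin,
    Nat.add_sub_cancel]
  simp only [nsmul_eq_mul, F]
  rw [sum_congr rfl fun t ht =>
      choose_mul_sq_shapW1_mul_add_choose (Nat.lt_succ_iff.mp (mem_range.mp ht)),
    ← mul_sum, sum_add_distrib, sum_range_one_div_sub_eq]
  push_cast
  field_simp
  ring
end

section
/- Fix an integer s ≥ 2. For each n ≥ s, let N_n = {1,…,n}, let S_n ⊆ N_n with |S_n| = s, let the Shapley interaction weights be p_t^s(n) := 1/((n−s+1) · C(n−s, t)), and let leverage sampling be P_n(T) := 1/((n+1) · C(n, |T|)). Then the variance factor Γ_{S_n}(P_n) := ∑_{T ⊆ N_n} (p^s_{|T|−|S_n∩T|}(n))² / P_n(T) is O(n^{s−1}) as n → ∞; i.e., there exists a constant C depending only on s such that Γ_{S_n}(P_n) ≤ C · n^{s−1} for all sufficiently large n. -/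
open Finset

/-- Variance factor of the MSR estimator for the Shapley interaction index
under leverage sampling. -/
noncomputable def GammaShap (n s : ℕ) (S : Finset (Fin n)) : ℝ :=
  ∑ T : Finset (Fin n), (shapW n s (T.card - (S ∩ T).card)) ^ 2 / lev n T

/- ### Auxiliary lemmas -/

private lemma lemA (m k : ℕ) : ∀ i : ℕ,
    Nat.choose (m+i) k * (m+1-k)^i ≤ (m+i)^i * Nat.choose m k := by
  intro i
  induction i with
  | zero => simp
  | succ i ih =>
    have key : Nat.choose (m+i) k * (m+i+1) = Nat.choose (m+i+1) k * (m+i+1-k) :=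
      Nat.choose_mul_succ_eq (m+i) k
    show Nat.choose (m+i+1) k * (m+1-k)^(i+1) ≤ (m+i+1)^(i+1) * Nat.choose m k
    calc Nat.choose (m+i+1) k * (m+1-k)^(i+1)
        = (Nat.choose (m+i+1) k * (m+1-k)) * (m+1-k)^i := by rw [pow_succ]; ring
      _ ≤ (Nat.choose (m+i+1) k * (m+i+1-k)) * (m+1-k)^i :=
          Nat.mul_le_mul_right _ (Nat.mul_le_mul_left _ (by omega))
      _ = ((m+i+1) * Nat.choose (m+i) k) * (m+1-k)^i := by rw [← key]; ring
      _ = (m+i+1) * (Nat.choose (m+i) k * (m+1-k)^i) := by ring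
      _ ≤ (m+i+1) * ((m+i)^i * Nat.choose m k) := Nat.mul_le_mul_left _ ih
      _ ≤ (m+i+1) * ((m+i+1)^i * Nat.choose m k) :=
          Nat.mul_le_mul_left _ (Nat.mul_le_mul_right _ (Nat.pow_le_pow_left (by omega) i))
      _ = (m+i+1)^(i+1) * Nat.choose m k := by rw [pow_succ]; ring

private lemma lemB (m k : ℕ) : ∀ i : ℕ,
    Nat.choose (m+i) (k+i) * (k+1)^i ≤ (m+i)^i * Nat.choose m k := by
  intro i
  induction i with
  | zero => simp
  | succ i ih =>
    have key : (m+i+1) * Nat.choose (m+i) (k+i) = Nat.choose (m+i+1) (k+i+1) * (k+i+1) :=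
      Nat.add_one_mul_choose_eq (m+i) (k+i)
    show Nat.choose (m+i+1) (k+i+1) * (k+1)^(i+1) ≤ (m+i+1)^(i+1) * Nat.choose m k
    calc Nat.choose (m+i+1) (k+i+1) * (k+1)^(i+1)
        = (Nat.choose (m+i+1) (k+i+1) * (k+1)) * (k+1)^i := by rw [pow_succ]; ring
      _ ≤ (Nat.choose (m+i+1) (k+i+1) * (k+i+1)) * (k+1)^i :=
          Nat.mul_le_mul_right _ (Nat.mul_le_mul_left _ (by omega))
      _ = ((m+i+1) * Nat.choose (m+i) (k+i)) * (k+1)^i := by rw [key]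
      _ = (m+i+1) * (Nat.choose (m+i) (k+i) * (k+1)^i) := by ring
      _ ≤ (m+i+1) * ((m+i)^i * Nat.choose m k) := Nat.mul_le_mul_left _ ih
      _ ≤ (m+i+1) * ((m+i+1)^i * Nat.choose m k) :=
          Nat.mul_le_mul_left _ (Nat.mul_le_mul_right _ (Nat.pow_le_pow_left (by omega) i))
      _ = (m+i+1)^(i+1) * Nat.choose m k := by rw [pow_succ]; ring

private lemma lemC {n s a : ℕ} (t : ℕ) (ha : a ≤ s) (hsn : s ≤ n) :
    Nat.choose n (t+a) * ((t+1)^a * (n-s+1-t)^(s-a)) ≤ n^s * Nat.choose (n-s) t := by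
  have h1 : Nat.choose n (t+a) * (t+1)^a ≤ n^a * Nat.choose (n-a) t := by
    have h := lemB (n-a) t a
    rwa [Nat.sub_add_cancel (le_trans ha hsn)] at h
  have h2 : Nat.choose (n-a) t * (n-s+1-t)^(s-a) ≤ (n-a)^(s-a) * Nat.choose (n-s) t := by
    have h := lemA (n-s) t (s-a)
    have e : n - s + (s - a) = n - a := by omega
    rw [e] at h
    exact h
  calc Nat.choose n (t+a) * ((t+1)^a * (n-s+1-t)^(s-a))
      = (Nat.choose n (t+a) * (t+1)^a) * (n-s+1-t)^(s-a) := by ring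
    _ ≤ (n^a * Nat.choose (n-a) t) * (n-s+1-t)^(s-a) := Nat.mul_le_mul_right _ h1
    _ = n^a * (Nat.choose (n-a) t * (n-s+1-t)^(s-a)) := by ring
    _ ≤ n^a * ((n-a)^(s-a) * Nat.choose (n-s) t) := Nat.mul_le_mul_left _ h2
    _ ≤ n^a * (n^(s-a) * Nat.choose (n-s) t) :=
        Nat.mul_le_mul_left _ (Nat.mul_le_mul_right _ (Nat.pow_le_pow_left (by omega) _))
    _ = (n^a * n^(s-a)) * Nat.choose (n-s) t := by ring
    _ = n^s * Nat.choose (n-s) t := by rw [← pow_add, Nat.add_sub_cancel' ha]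

/-- `1/(X^a Y^b) ≤ 1/X² + 1/Y²` for `X, Y ≥ 1` and `a + b ≥ 2` (with `a ≤ s`, `b = s−a`). -/
private lemma inv_pow_bound {X Y : ℝ} (hX : 1 ≤ X) (hY : 1 ≤ Y) {s a : ℕ}
    (hs : 2 ≤ s) (ha : a ≤ s) :
    1 / (X^a * Y^(s-a)) ≤ 1 / X^2 + 1 / Y^2 := by
  have hX0 : (0:ℝ) < X := lt_of_lt_of_le one_pos hX
  have hY0 : (0:ℝ) < Y := lt_of_lt_of_le one_pos hY
  have hXp : (0:ℝ) < X^a := pow_pos hX0 _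
  have hYp : (0:ℝ) < Y^(s-a) := pow_pos hY0 _
  rcases le_or_gt 2 a with h2a | h2a
  · -- X^a ≥ X^2, Y^(s-a) ≥ 1
    have h1 : X^2 ≤ X^a * Y^(s-a) := by
      calc X^2 = X^2 * 1 := by ring
        _ ≤ X^a * Y^(s-a) :=
          mul_le_mul (pow_le_pow_right₀ hX h2a) (one_le_pow₀ hY) one_pos.le hXp.le
    have := one_div_le_one_div_of_le (pow_pos hX0 2) h1
    calc 1 / (X^a * Y^(s-a)) ≤ 1 / X^2 := this
      _ ≤ 1 / X^2 + 1 / Y^2 := le_add_of_nonneg_right (by positivity)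
  · rcases le_or_gt 2 (s-a) with h2b | h2b
    · have h1 : Y^2 ≤ X^a * Y^(s-a) := by
        calc Y^2 = 1 * Y^2 := by ring
          _ ≤ X^a * Y^(s-a) :=
            mul_le_mul (one_le_pow₀ hX) (pow_le_pow_right₀ hY h2b) (by positivity) hXp.le
      have := one_div_le_one_div_of_le (pow_pos hY0 2) h1
      calc 1 / (X^a * Y^(s-a)) ≤ 1 / Y^2 := this
        _ ≤ 1 / X^2 + 1 / Y^2 := le_add_of_nonneg_left (by positivity)
    · -- a ≤ 1, s-a ≤ 1, s ≥ 2 forces a = 1, s = 2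
      have haa : a = 1 := by omega
      have hss : s - a = 1 := by omega
      rw [hss, haa, pow_one, pow_one]
      rw [div_add_div _ _ (by positivity) (by positivity), div_le_div_iff₀ (by positivity) (by positivity)]
      nlinarith [sq_nonneg (X - Y), mul_pos hX0 hY0]

/-- Cast of `lemC` packaged as the key ratio bound. -/
private lemma ratio_bound {n s a t : ℕ} (hs : 2 ≤ s) (hsn : s ≤ n) (ha : a ≤ s)
    (ht : t ≤ n - s) :
    (Nat.choose n (a+t) : ℝ) ≤ (n:ℝ)^s * (Nat.choose (n-s) t : ℝ) *
      (1 / ((t:ℝ)+1)^2 + 1 / (((n-s+1-t : ℕ)):ℝ)^2) := by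
  set X : ℝ := ((t:ℝ)+1) with hXdef
  set Y : ℝ := (((n-s+1-t : ℕ)):ℝ) with hYdef
  have hX : (1:ℝ) ≤ X := by rw [hXdef]; linarith [Nat.cast_nonneg (α := ℝ) t]
  have hY : (1:ℝ) ≤ Y := by
    rw [hYdef]
    have : 1 ≤ n - s + 1 - t := by omega
    exact_mod_cast this
  have hX0 : (0:ℝ) < X := lt_of_lt_of_le one_pos hX
  have hY0 : (0:ℝ) < Y := lt_of_lt_of_le one_pos hY
  have hcast : (Nat.choose n (a+t) : ℝ) * (X^a * Y^(s-a)) ≤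
      (n:ℝ)^s * (Nat.choose (n-s) t : ℝ) := by
    have h := lemC (n := n) (s := s) (a := a) t ha hsn
    have h' : ((Nat.choose n (t+a) * ((t+1)^a * (n-s+1-t)^(s-a)) : ℕ) : ℝ)
        ≤ ((n^s * Nat.choose (n-s) t : ℕ) : ℝ) := Nat.cast_le.mpr h
    push_cast at h'
    rw [Nat.add_comm t a] at h'
    calc (Nat.choose n (a+t) : ℝ) * (X^a * Y^(s-a))
        = (Nat.choose n (a+t) : ℝ) * (((t:ℝ)+1)^a * (((n-s+1-t : ℕ)):ℝ)^(s-a)) := by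
          rw [hXdef, hYdef]
      _ ≤ (n:ℝ)^s * (Nat.choose (n-s) t : ℝ) := by exact_mod_cast h'
  have hprod : (0:ℝ) < X^a * Y^(s-a) := by positivity
  have hM : (0:ℝ) ≤ (n:ℝ)^s * (Nat.choose (n-s) t : ℝ) := by positivity
  have step : (Nat.choose n (a+t) : ℝ) ≤
      (n:ℝ)^s * (Nat.choose (n-s) t : ℝ) * (1 / (X^a * Y^(s-a))) := by
    rw [mul_one_div, le_div_iff₀ hprod]
    linarith [hcast]
  calc (Nat.choose n (a+t) : ℝ)
      ≤ (n:ℝ)^s * (Nat.choose (n-s) t : ℝ) * (1 / (X^a * Y^(s-a))) := step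
    _ ≤ (n:ℝ)^s * (Nat.choose (n-s) t : ℝ) * (1 / X^2 + 1 / Y^2) :=
        mul_le_mul_of_nonneg_left (inv_pow_bound hX hY hs ha) hM

private lemma sum_inv_sq_le (v : ℕ) : ∑ t ∈ Finset.range v, (1:ℝ)/((t:ℝ)+1)^2 ≤ 2 := by
  have key : ∀ w : ℕ, ∑ t ∈ Finset.range (w+1), (1:ℝ)/((t:ℝ)+1)^2 ≤ 2 - 1/((w:ℝ)+1) := by
    intro w
    induction w with
    | zero => norm_num
    | succ w ih =>
      rw [Finset.sum_range_succ]
      have h1 : (1:ℝ)/(((w:ℝ)+1)+1)^2 ≤ 1/((w:ℝ)+1) - 1/(((w:ℝ)+1)+1) := by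
        have hw : (0:ℝ) < (w:ℝ)+1 := by positivity
        have hw2 : (0:ℝ) < (w:ℝ)+2 := by positivity
        rw [div_sub_div _ _ (by positivity) (by positivity)]
        rw [div_le_div_iff₀ (by positivity) (by positivity)]
        ring_nf
        nlinarith
      push_cast
      push_cast at ih h1
      linarith
  cases v with
  | zero => simp
  | succ w =>
    have := key w
    have hpos : (0:ℝ) < (w:ℝ)+1 := by positivity
    have : (0:ℝ) ≤ 1/((w:ℝ)+1) := by positivity
    linarith [key w]

private lemma sum_inv_sq_le' (v : ℕ) :
    ∑ t ∈ Finset.range v, (1:ℝ)/(((v - t : ℕ)):ℝ)^2 ≤ 2 := by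
  have h := Finset.sum_range_reflect (fun j => (1:ℝ)/(((v - j : ℕ)):ℝ)^2) v
  rw [← h]
  have : ∀ j ∈ Finset.range v, (1:ℝ)/(((v - (v - 1 - j) : ℕ)):ℝ)^2 = (1:ℝ)/((j:ℝ)+1)^2 := by
    intro j hj
    rw [Finset.mem_range] at hj
    have e : v - (v - 1 - j) = j + 1 := by omega
    rw [e]
    push_cast
    ring_nf
  rw [Finset.sum_congr rfl this]
  exact sum_inv_sq_le v

/-- Per-subset integrand. -/
noncomputable def Faux (n s c t : ℕ) : ℝ :=
  shapW n s t ^ 2 * ((((n:ℝ))+1) * (Nat.choose n c : ℝ))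

private lemma gamma_eq (n s : ℕ) (S : Finset (Fin n)) :
    GammaShap n s S = ∑ A ∈ S.powerset, ∑ B ∈ Sᶜ.powerset,
      Faux n s (A.card + B.card) B.card := by
  unfold GammaShap
  rw [← Finset.sum_product S.powerset Sᶜ.powerset (fun p => Faux n s (p.1.card + p.2.card) p.2.card)]
  refine Finset.sum_nbij' (fun T => (T ∩ S, T \ S)) (fun p => p.1 ∪ p.2) ?_ ?_ ?_ ?_ ?_
  · intro T _
    rw [Finset.mem_product]
    constructor
    · exact Finset.mem_powerset.mpr Finset.inter_subset_right
    · refine Finset.mem_powerset.mpr ?_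
      intro x hx
      rw [Finset.mem_sdiff] at hx
      simpa using hx.2
  · intro p _; exact Finset.mem_univ _
  · intro T _
    ext x
    simp only [Finset.mem_union, Finset.mem_inter, Finset.mem_sdiff]
    tauto
  · intro p hp
    rw [Finset.mem_product, Finset.mem_powerset, Finset.mem_powerset] at hp
    obtain ⟨h1, h2⟩ := hp
    have hd : ∀ x ∈ p.2, x ∉ S := by
      intro x hx; have := h2 hx; simpa using this
    ext1 <;> ext x <;>
      simp only [Finset.mem_inter, Finset.mem_union, Finset.mem_sdiff] <;>
      constructor
    · rintro ⟨hx | hx, hxS⟩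
      · exact hx
      · exact absurd hxS (hd x hx)
    · intro hx; exact ⟨Or.inl hx, h1 hx⟩
    · rintro ⟨hx | hx, hxS⟩
      · exact absurd (h1 hx) hxS
      · exact hx
    · intro hx; exact ⟨Or.inr hx, hd x hx⟩
  · intro T _
    have hcard : (T ∩ S).card + (T \ S).card = T.card :=
      Finset.card_inter_add_card_sdiff T S
    have hc1 : T.card - (S ∩ T).card = (T \ S).card := by
      rw [Finset.inter_comm]; omega
    show shapW n s (T.card - (S ∩ T).card) ^ 2 / lev n T
        = Faux n s ((T ∩ S).card + (T \ S).card) (T \ S).card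
    rw [hc1, hcard]
    unfold lev Faux
    rw [one_div, division_def, inv_inv]
    push_cast
    ring

private lemma choose_card_ne (n : ℕ) (T : Finset (Fin n)) :
    ((Nat.choose n T.card : ℕ) : ℝ) ≠ 0 := by
  have h : T.card ≤ n := by simpa using Finset.card_le_univ T
  exact_mod_cast (Nat.choose_pos h).ne'

/-- For fixed interaction order `s ≥ 2`, the variance factor `Γ_{S_n}(P_n)` under
leverage sampling is `O(n^{s−1})` as `n → ∞`. -/
theorem gamma_shapley_leverage_bigO (s : ℕ) (hs : 2 ≤ s) :
    ∃ C : ℝ, ∃ N₀ : ℕ, ∀ n : ℕ, N₀ ≤ n → s ≤ n →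
      ∀ S : Finset (Fin n), S.card = s →
        GammaShap n s S ≤ C * (n : ℝ) ^ (s - 1) := by
  refine ⟨(2:ℝ)^(s+5), 2*s, ?_⟩
  intro n hn hsn S hS
  have hn4 : 4 ≤ n := by omega
  have hnR : (0:ℝ) < (n:ℝ) := by exact_mod_cast Nat.pos_of_ne_zero (by omega)
  set D : ℝ := ((n - s + 1 : ℕ) : ℝ) with hD
  have hD1 : (1:ℝ) ≤ D := by
    rw [hD]; exact_mod_cast Nat.succ_le_succ (Nat.zero_le _)
  have hD0 : (0:ℝ) < D := lt_of_lt_of_le one_pos hD1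
  have hSc : Sᶜ.card = n - s := by rw [Finset.card_compl, hS, Fintype.card_fin]
  set K : ℝ := (((n:ℝ))+1) * (n:ℝ)^s / D^2 with hK
  have hK0 : (0:ℝ) ≤ K := by positivity
  set bnd : ℕ → ℝ := fun t => K * (1/((t:ℝ)+1)^2 + 1/(((n-s+1-t : ℕ)):ℝ)^2)
      / (Nat.choose (n-s) t : ℝ) with hbnd
  -- per-term bound
  have hterm : ∀ A ∈ S.powerset, ∀ B ∈ Sᶜ.powerset,
      Faux n s (A.card + B.card) B.card ≤ bnd B.card := by
    intro A hA B hB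
    have ha : A.card ≤ s := by
      have h := Finset.card_le_card (Finset.mem_powerset.mp hA); rwa [hS] at h
    have ht : B.card ≤ n - s := by
      have h := Finset.card_le_card (Finset.mem_powerset.mp hB); rwa [hSc] at h
    have hCt : (0:ℝ) < (Nat.choose (n-s) B.card : ℝ) := by
      exact_mod_cast Nat.choose_pos ht
    have hCt' : (Nat.choose (n-s) B.card : ℝ) ≠ 0 := hCt.ne'
    have hD' : D ≠ 0 := hD0.ne'
    have hrb := ratio_bound hs hsn ha ht
    have e1 : Faux n s (A.card + B.card) B.card
        = ((n:ℝ)+1) * (Nat.choose n (A.card+B.card) : ℝ)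
          * (1/(D^2 * ((Nat.choose (n-s) B.card : ℝ))^2)) := by
      unfold Faux shapW
      rw [← hD]
      ring
    rw [e1, hbnd]
    calc ((n:ℝ)+1) * (Nat.choose n (A.card+B.card) : ℝ)
          * (1/(D^2 * ((Nat.choose (n-s) B.card : ℝ))^2))
        ≤ ((n:ℝ)+1) * ((n:ℝ)^s * (Nat.choose (n-s) B.card : ℝ)
            * (1 / ((B.card:ℝ)+1)^2 + 1 / (((n-s+1-B.card : ℕ)):ℝ)^2))
          * (1/(D^2 * ((Nat.choose (n-s) B.card : ℝ))^2)) := by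
          apply mul_le_mul_of_nonneg_right _ (by positivity)
          exact mul_le_mul_of_nonneg_left hrb (by positivity)
      _ = K * (1/((B.card:ℝ)+1)^2 + 1/(((n-s+1-B.card : ℕ)):ℝ)^2)
            / (Nat.choose (n-s) B.card : ℝ) := by
          rw [hK]; field_simp
  -- rewrite Γ and sum the bound
  rw [gamma_eq]
  have step2 : ∑ A ∈ S.powerset, ∑ B ∈ Sᶜ.powerset, Faux n s (A.card + B.card) B.card
      ≤ ∑ A ∈ S.powerset, ∑ B ∈ Sᶜ.powerset, bnd B.card :=
    Finset.sum_le_sum (fun A hA => Finset.sum_le_sum (fun B hB => hterm A hA B hB))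
  have step3 : ∑ B ∈ Sᶜ.powerset, bnd B.card
      = ∑ j ∈ Finset.range (n-s+1), (Nat.choose (n-s) j : ℝ) * bnd j := by
    rw [Finset.sum_powerset, hSc]
    refine Finset.sum_congr rfl (fun j hj => ?_)
    rw [Finset.sum_congr rfl
      (fun B hB => congrArg bnd (Finset.mem_powersetCard.mp hB).2)]
    rw [Finset.sum_const, Finset.card_powersetCard, hSc, nsmul_eq_mul]
  have step4 : ∑ j ∈ Finset.range (n-s+1), (Nat.choose (n-s) j : ℝ) * bnd j ≤ 4 * K := by
    have e2 : ∀ j ∈ Finset.range (n-s+1), (Nat.choose (n-s) j : ℝ) * bnd j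
        = K * (1/((j:ℝ)+1)^2 + 1/(((n-s+1-j : ℕ)):ℝ)^2) := by
      intro j hj
      have hj' : j ≤ n - s := by
        have := Finset.mem_range.mp hj; omega
      have hCj : (Nat.choose (n-s) j : ℝ) ≠ 0 := by
        exact_mod_cast (Nat.choose_pos hj').ne'
      rw [hbnd]
      field_simp
    rw [Finset.sum_congr rfl e2, ← Finset.mul_sum, Finset.sum_add_distrib]
    have h1 := sum_inv_sq_le (n-s+1)
    have h2 := sum_inv_sq_le' (n-s+1)
    calc K * (∑ j ∈ Finset.range (n-s+1), 1/((j:ℝ)+1)^2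
            + ∑ j ∈ Finset.range (n-s+1), 1/(((n-s+1-j : ℕ)):ℝ)^2)
        ≤ K * (2 + 2) := by
          apply mul_le_mul_of_nonneg_left _ hK0
          exact add_le_add h1 h2
      _ = 4 * K := by ring
  have step5 : ∑ B ∈ Sᶜ.powerset, bnd B.card ≤ 4 * K := step3 ▸ step4
  have hKbound : K ≤ 8 * (n:ℝ)^(s-1) := by
    have hDn : (n:ℝ)/2 ≤ D := by
      rw [hD]
      have e : ((n - s + 1 : ℕ) : ℝ) = (n:ℝ) - (s:ℝ) + 1 := by
        push_cast [Nat.cast_sub hsn]; ring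
      rw [e]
      have h2s : (2:ℝ) * (s:ℝ) ≤ (n:ℝ) := by exact_mod_cast hn
      linarith
    have hpow : (n:ℝ)^s = (n:ℝ)^(s-1) * (n:ℝ) := by
      conv_lhs => rw [show s = (s-1)+1 by omega]
      rw [pow_succ]
    have hP : (0:ℝ) ≤ (n:ℝ)^(s-1) := by positivity
    rw [hK, div_le_iff₀ (by positivity), hpow]
    have hD2 : (n:ℝ)^2/4 ≤ D^2 := by nlinarith
    have hn1 : (n:ℝ) + 1 ≤ 2 * (n:ℝ) := by
      have : (1:ℝ) ≤ (n:ℝ) := by exact_mod_cast Nat.one_le_iff_ne_zero.mpr (by omega)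
      linarith
    nlinarith [mul_nonneg hP (sq_nonneg (n:ℝ)), mul_le_mul_of_nonneg_left hD2 (mul_nonneg (by norm_num : (0:ℝ) ≤ 8) hP)]
  calc ∑ A ∈ S.powerset, ∑ B ∈ Sᶜ.powerset, Faux n s (A.card + B.card) B.card
      ≤ ∑ A ∈ S.powerset, ∑ B ∈ Sᶜ.powerset, bnd B.card := step2
    _ ≤ S.powerset.card • (4 * K) :=
        Finset.sum_le_card_nsmul _ _ _ (fun A _ => step5)
    _ = 2^s * (4 * K) := by
        rw [Finset.card_powerset, hS, nsmul_eq_mul]; push_cast; ring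
    _ ≤ (2:ℝ)^(s+5) * (n:ℝ)^(s-1) := by
        have e : (2:ℝ)^(s+5) = 2^s * 32 := by rw [pow_add]; norm_num
        rw [e]
        have h2s : (0:ℝ) ≤ (2:ℝ)^s := by positivity
        calc (2:ℝ)^s * (4 * K) ≤ (2:ℝ)^s * (4 * (8 * (n:ℝ)^(s-1))) := by
              apply mul_le_mul_of_nonneg_left _ h2s
              linarith
          _ = 2^s * 32 * (n:ℝ)^(s-1) := by ring
end

section
/- Fix an integer s ≥ 2. For each n ≥ s, let S_n ⊆ {1,…,n} with |S_n| = s, let the Shapley interaction weights be p_t^s(n) := 1/((n−s+1) · C(n−s, t)), and let leverage sampling be P_n(T) := 1/((n+1) · C(n, |T|)). Then Γ_{S_n}(P_n) = Θ(n^{s−1}) as n → ∞; i.e., there exist constants c, C > 0 depending only on s such that c · n^{s−1} ≤ Γ_{S_n}(P_n) ≤ C · n^{s−1} for all sufficiently large n. In particular, the lower bound Γ_{S_n}(P_n) ≥ ((n+1) · (n−s+1)_s / (n−s+1)²) · ∑_{j=1}^{n−s+1} 1/(j)_s holds for all n ≥ s, where (a)_k denotes the rising factorial. -/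
open Finset

/-!
Split `T` into `T ∩ S` and `T \ S`, of sizes `k` and `m`. The summand of `Γ` depends only on
`(k, m)`, and the factorial identity
`C(n, k + m) / C(n - s, m) = (n - s + 1)_s / ((m + 1)_k (n - s - m + 1)_{s - k})`
turns `Γ` into
`(n + 1) (n - s + 1)_s / (n - s + 1)² · Σ_k C(s, k) Σ_m 1 / ((m + 1)_k (n - s - m + 1)_{s - k})`.
The prefactor is `Θ(n^{s - 1})`. The row `k = s` of the double sum is `Σ_j 1 / (j)_s`, which gives
the explicit lower bound and is at least `1 / s!`. Every row is at most `2`, because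
`1 / ((a)_k (b)_l) ≤ 1 / (a (a + 1)) + 1 / (b (b + 1))` when `k + l ≥ 2`, and the right side
telescopes along the row.
-/

theorem rf_eq_ascFactorial (a k : ℕ) : rf a k = a.ascFactorial k :=
  (Nat.ascFactorial_eq_prod_range a k).symm

theorem le_ascFactorial (a : ℕ) {k : ℕ} (hk : 1 ≤ k) : a ≤ a.ascFactorial k := by
  rw [← Nat.add_sub_cancel' hk, ← Nat.ascFactorial_mul_ascFactorial]
  simpa [Nat.ascFactorial] using Nat.le_mul_of_pos_right a (Nat.ascFactorial_pos a (k - 1))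

theorem mul_add_one_le_ascFactorial (a : ℕ) {k : ℕ} (hk : 2 ≤ k) :
    a * (a + 1) ≤ a.ascFactorial k := by
  rw [← Nat.add_sub_cancel' hk, ← Nat.ascFactorial_mul_ascFactorial]
  simpa [Nat.ascFactorial_succ, mul_comm] using
    Nat.le_mul_of_pos_right (a * (a + 1)) (Nat.ascFactorial_pos (a + 1) (k - 2))

theorem choose_mul_ascFactorial_mul_ascFactorial (m r k l : ℕ) :
    (m + k + (r + l)).choose (m + k) * ((m + 1).ascFactorial k * (r + 1).ascFactorial l) =
      (m + r + 1).ascFactorial (k + l) * (m + r).choose m := by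
  apply Nat.eq_of_mul_eq_mul_right (Nat.mul_pos (m.factorial_pos) (r.factorial_pos))
  calc (m + k + (r + l)).choose (m + k) * ((m + 1).ascFactorial k * (r + 1).ascFactorial l)
        * (m.factorial * r.factorial)
      = (m + k + (r + l)).choose (r + l) * (m.factorial * (m + 1).ascFactorial k)
          * (r.factorial * (r + 1).ascFactorial l) := by rw [Nat.choose_symm_add]; ring
    _ = (m + r + (k + l)).factorial := by
        rw [Nat.factorial_mul_ascFactorial, Nat.factorial_mul_ascFactorial,
          Nat.add_choose_mul_factorial_mul_factorial]
        ring_nf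
    _ = (m + r + 1).ascFactorial (k + l) * (m + r).choose m * (m.factorial * r.factorial) := by
        rw [← Nat.factorial_mul_ascFactorial, ← Nat.add_choose_mul_factorial_mul_factorial m r,
          Nat.choose_symm_add]
        ring

section Decomposition

variable {α β : Type*} [Fintype α] [DecidableEq α] [AddCommMonoid β]

theorem union_inter_eq_and_union_sdiff_eq {S A B : Finset α} (hA : A ⊆ S) (hB : B ⊆ Sᶜ) :
    (A ∪ B) ∩ S = A ∧ (A ∪ B) \ S = B := by
  constructor <;> ext x <;> have := @hA x <;> have := @hB x <;>
    simp only [mem_inter, mem_union, mem_sdiff, mem_compl] at * <;> tauto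

theorem sum_eq_sum_powerset_sum_powerset_compl (S : Finset α) (f : Finset α → β) :
    ∑ T, f T = ∑ A ∈ S.powerset, ∑ B ∈ Sᶜ.powerset, f (A ∪ B) := by
  rw [← sum_product']
  refine sum_nbij' (fun T ↦ (T ∩ S, T \ S)) (fun p ↦ p.1 ∪ p.2) ?_ (by simp) (fun T _ ↦ ?_)
    (fun p hp ↦ ?_) (fun T _ ↦ ?_)
  · intro T _
    simp only [mem_product, mem_powerset]
    exact ⟨inter_subset_right, fun x hx ↦ by simp_all⟩
  · exact sup_inf_sdiff T S
  · simp only [mem_product, mem_powerset] at hp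
    obtain ⟨h₁, h₂⟩ := union_inter_eq_and_union_sdiff_eq hp.1 hp.2
    rw [h₁, h₂]
  · exact congrArg f (sup_inf_sdiff T S).symm

theorem sum_eq_sum_card_inter_card_sdiff (S : Finset α) (g : ℕ → ℕ → β) :
    ∑ T, g #(T ∩ S) #(T \ S) =
      ∑ k ∈ range (#S + 1), ∑ m ∈ range (#Sᶜ + 1), (#S).choose k • (#Sᶜ).choose m • g k m := by
  rw [sum_eq_sum_powerset_sum_powerset_compl S]
  calc ∑ A ∈ S.powerset, ∑ B ∈ Sᶜ.powerset, g #((A ∪ B) ∩ S) #((A ∪ B) \ S)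
      = ∑ A ∈ S.powerset, ∑ B ∈ Sᶜ.powerset, g #A #B :=
        sum_congr rfl fun A hA ↦ sum_congr rfl fun B hB ↦ by
          obtain ⟨h₁, h₂⟩ :=
            union_inter_eq_and_union_sdiff_eq (mem_powerset.1 hA) (mem_powerset.1 hB)
          rw [h₁, h₂]
    _ = ∑ A ∈ S.powerset, ∑ m ∈ range (#Sᶜ + 1), (#Sᶜ).choose m • g #A m :=
        sum_congr rfl fun A _ ↦ sum_powerset_apply_card (g #A)
    _ = _ := by
        rw [sum_powerset_apply_card (fun k ↦ ∑ m ∈ range (#Sᶜ + 1), (#Sᶜ).choose m • g k m)]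
        simp_rw [smul_sum]

end Decomposition

noncomputable def gammaScale (n s : ℕ) : ℝ :=
  ((n + 1 : ℕ) : ℝ) * (rf (n - s + 1) s : ℝ) / ((n - s + 1 : ℕ) : ℝ) ^ 2

noncomputable def gammaSum (n s : ℕ) : ℝ :=
  ∑ k ∈ range (s + 1), (s.choose k : ℝ) *
    ∑ m ∈ range (n - s + 1), 1 / ((rf (m + 1) k : ℝ) * (rf (n - s - m + 1) (s - k) : ℝ))

theorem choose_mul_mul_shapW_sq {n s k m : ℕ} (hk : k ≤ s) (hm : m ≤ n - s) (hsn : s ≤ n) :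
    ((n - s).choose m : ℝ) * (((n + 1 : ℕ) : ℝ) * n.choose (k + m) * shapW n s m ^ 2) =
      gammaScale n s * (1 / ((rf (m + 1) k : ℝ) * (rf (n - s - m + 1) (s - k) : ℝ))) := by
  obtain ⟨l, rfl⟩ : ∃ l, s = k + l := ⟨s - k, by omega⟩
  obtain ⟨r, rfl⟩ : ∃ r, n = m + k + (r + l) := ⟨n - (k + l) - m, by omega⟩
  have hM : m + k + (r + l) - (k + l) = m + r := by omega
  have hid : ((m + k + (r + l)).choose (m + k) : ℝ) *
      (((m + 1).ascFactorial k : ℝ) * ((r + 1).ascFactorial l : ℝ)) =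
        ((m + r + 1).ascFactorial (k + l) : ℝ) * ((m + r).choose m : ℝ) := by
    exact_mod_cast choose_mul_ascFactorial_mul_ascFactorial m r k l
  have hchoose : (0 : ℝ) < (m + r).choose m := by exact_mod_cast Nat.choose_pos (by omega)
  have hrf₁ : (0 : ℝ) < (m + 1).ascFactorial k := by exact_mod_cast Nat.ascFactorial_pos m k
  have hrf₂ : (0 : ℝ) < (r + 1).ascFactorial l := by exact_mod_cast Nat.ascFactorial_pos r l
  simp only [gammaScale, shapW, rf_eq_ascFactorial, hM, add_tsub_cancel_left,
    show m + r - m = r by omega, add_comm k m]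
  push_cast
  field_simp
  linear_combination hid

theorem gammaShap_eq {n s : ℕ} (hsn : s ≤ n) {S : Finset (Fin n)} (hS : #S = s) :
    GammaShap n s S = gammaScale n s * gammaSum n s := by
  set g : ℕ → ℕ → ℝ := fun k m ↦ ((n + 1 : ℕ) : ℝ) * n.choose (k + m) * shapW n s m ^ 2
  have hsummand (T : Finset (Fin n)) :
      shapW n s (#T - #(S ∩ T)) ^ 2 / lev n T = g #(T ∩ S) #(T \ S) := by
    have hcard := card_inter_add_card_sdiff T S
    rw [inter_comm S T]
    simp only [g, lev, one_div, div_inv_eq_mul, ← hcard, Nat.add_sub_cancel_left]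
    ring
  rw [GammaShap, sum_congr rfl fun T _ ↦ hsummand T, sum_eq_sum_card_inter_card_sdiff,
    card_compl, Fintype.card_fin, hS, gammaSum, mul_sum]
  refine sum_congr rfl fun k hk ↦ ?_
  rw [mul_left_comm, mul_sum, mul_sum]
  refine sum_congr rfl fun m hm ↦ ?_
  rw [nsmul_eq_mul, nsmul_eq_mul, choose_mul_mul_shapW_sq (mem_range_succ_iff.1 hk)
    (mem_range_succ_iff.1 hm) hsn]

theorem gammaScale_nonneg (n s : ℕ) : 0 ≤ gammaScale n s := by
  unfold gammaScale
  positivity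

theorem gammaScale_le {n s : ℕ} (hs : 1 ≤ s) (hn : 2 * s ≤ n) :
    gammaScale n s ≤ 8 * (n : ℝ) ^ (s - 1) := by
  have hrf : (rf (n - s + 1) s : ℝ) ≤ (n : ℝ) * (n : ℝ) ^ (s - 1) := by
    rw [← pow_succ', Nat.sub_add_cancel hs, rf_eq_ascFactorial]
    have h := Nat.ascFactorial_le_pow_add (n - s) s
    rw [Nat.sub_add_cancel (by omega)] at h
    exact_mod_cast h
  have hhalf : (n : ℝ) ≤ 2 * ((n - s + 1 : ℕ) : ℝ) := by
    exact_mod_cast (by omega : n ≤ 2 * (n - s + 1))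
  have hn1 : (1 : ℝ) ≤ n := by exact_mod_cast (by omega : 1 ≤ n)
  rw [gammaScale, div_le_iff₀ (by positivity)]
  calc ((n + 1 : ℕ) : ℝ) * (rf (n - s + 1) s : ℝ)
      ≤ (2 * n) * ((n : ℝ) * (n : ℝ) ^ (s - 1)) := by
        push_cast
        exact mul_le_mul (by linarith) hrf (Nat.cast_nonneg _) (by positivity)
    _ = 2 * (n : ℝ) ^ 2 * (n : ℝ) ^ (s - 1) := by ring
    _ ≤ 2 * (2 * ((n - s + 1 : ℕ) : ℝ)) ^ 2 * (n : ℝ) ^ (s - 1) := by gcongr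
    _ = 8 * (n : ℝ) ^ (s - 1) * ((n - s + 1 : ℕ) : ℝ) ^ 2 := by ring

theorem le_gammaScale {n s : ℕ} (hs : 2 ≤ s) (hn : 2 * s ≤ n) :
    (n : ℝ) ^ (s - 1) / 2 ^ (s - 2) ≤ gammaScale n s := by
  set y : ℝ := ((n - s + 1 : ℕ) : ℝ)
  have hrf : y ^ 2 * y ^ (s - 2) ≤ (rf (n - s + 1) s : ℝ) := by
    rw [← pow_add, Nat.add_sub_cancel' hs, rf_eq_ascFactorial]
    simp only [y]
    exact_mod_cast Nat.pow_succ_le_ascFactorial (n - s + 1) s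
  have hhalf : (n : ℝ) / 2 ≤ y := by
    rw [div_le_iff₀ two_pos]
    simp only [y]
    exact_mod_cast (by omega : n ≤ (n - s + 1) * 2)
  rw [gammaScale, le_div_iff₀ (by positivity)]
  calc (n : ℝ) ^ (s - 1) / 2 ^ (s - 2) * y ^ 2
      = (n : ℝ) * ((n : ℝ) / 2) ^ (s - 2) * y ^ 2 := by
        rw [div_pow, ← Nat.sub_add_cancel (by omega : 1 ≤ s - 1), pow_succ',
          show s - 1 - 1 = s - 2 by omega]
        ring
    _ ≤ ((n + 1 : ℕ) : ℝ) * y ^ (s - 2) * y ^ 2 := by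
        push_cast
        gcongr
        linarith
    _ ≤ ((n + 1 : ℕ) : ℝ) * (rf (n - s + 1) s : ℝ) := by
        rw [mul_assoc, mul_comm (y ^ (s - 2))]
        gcongr

theorem one_div_mul_le_add {a b : ℝ} (ha : 1 ≤ a) (hb : 1 ≤ b) :
    1 / (a * b) ≤ 1 / (a * (a + 1)) + 1 / (b * (b + 1)) := by
  rw [div_add_div _ _ (by positivity) (by positivity),
    div_le_div_iff₀ (by positivity) (by positivity)]
  nlinarith [mul_pos (by linarith : (0:ℝ) < a) (by linarith : (0:ℝ) < b), sq_nonneg (a - b),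
    mul_le_mul ha hb zero_le_one (by linarith)]

theorem one_div_ascFactorial_mul_ascFactorial_le {a b k l : ℕ} (ha : 0 < a) (hb : 0 < b)
    (hkl : 2 ≤ k + l) :
    1 / ((a.ascFactorial k : ℝ) * b.ascFactorial l) ≤
      1 / ((a : ℝ) * (a + 1)) + 1 / ((b : ℝ) * (b + 1)) := by
  obtain ⟨a, rfl⟩ : ∃ a', a = a' + 1 := ⟨a - 1, by omega⟩
  obtain ⟨b, rfl⟩ : ∃ b', b = b' + 1 := ⟨b - 1, by omega⟩
  have hfa : (0 : ℝ) ≤ 1 / (((a + 1 : ℕ) : ℝ) * ((a + 1 : ℕ) + 1)) := by positivity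
  have hfb : (0 : ℝ) ≤ 1 / (((b + 1 : ℕ) : ℝ) * ((b + 1 : ℕ) + 1)) := by positivity
  rcases Nat.lt_or_ge k 1 with hk | hk
  · have hle : (b + 1) * (b + 1 + 1) ≤ (a + 1).ascFactorial k * (b + 1).ascFactorial l := by
      simpa [show k = 0 by omega] using mul_add_one_le_ascFactorial (b + 1) (k := l) (by omega)
    calc _ ≤ 1 / (((b + 1 : ℕ) : ℝ) * ((b + 1 : ℕ) + 1)) :=
          one_div_le_one_div_of_le (by positivity) (by exact_mod_cast hle)
      _ ≤ _ := le_add_of_nonneg_left hfa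
  rcases Nat.lt_or_ge l 1 with hl | hl
  · have hle : (a + 1) * (a + 1 + 1) ≤ (a + 1).ascFactorial k * (b + 1).ascFactorial l := by
      simpa [show l = 0 by omega] using mul_add_one_le_ascFactorial (a + 1) (k := k) (by omega)
    calc _ ≤ 1 / (((a + 1 : ℕ) : ℝ) * ((a + 1 : ℕ) + 1)) :=
          one_div_le_one_div_of_le (by positivity) (by exact_mod_cast hle)
      _ ≤ _ := le_add_of_nonneg_right hfb
  have hle : (a + 1) * (b + 1) ≤ (a + 1).ascFactorial k * (b + 1).ascFactorial l :=
    Nat.mul_le_mul (le_ascFactorial _ hk) (le_ascFactorial _ hl)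
  calc _ ≤ 1 / (((a + 1 : ℕ) : ℝ) * ((b + 1 : ℕ) : ℝ)) :=
        one_div_le_one_div_of_le (by positivity) (by exact_mod_cast hle)
    _ ≤ _ := one_div_mul_le_add (by simp) (by simp)

theorem sum_range_one_div_mul_add_one_le_one (N : ℕ) :
    ∑ m ∈ range N, 1 / (((m + 1 : ℕ) : ℝ) * ((m + 1 : ℕ) + 1)) ≤ 1 := by
  have htele (m : ℕ) : 1 / (((m + 1 : ℕ) : ℝ) * ((m + 1 : ℕ) + 1)) =
      1 / ((m : ℝ) + 1) - 1 / (((m + 1 : ℕ) : ℝ) + 1) := by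
    push_cast
    field_simp
    ring
  simp only [htele, sum_range_sub' (fun m : ℕ ↦ 1 / ((m : ℝ) + 1)), Nat.cast_zero, zero_add]
  simp only [div_one, sub_le_self_iff]
  positivity

theorem sum_range_one_div_rf_mul_rf_le_two {M k l : ℕ} (hkl : 2 ≤ k + l) :
    ∑ m ∈ range (M + 1), 1 / ((rf (m + 1) k : ℝ) * (rf (M - m + 1) l : ℝ)) ≤ 2 := by
  set f : ℕ → ℝ := fun j ↦ 1 / (((j + 1 : ℕ) : ℝ) * ((j + 1 : ℕ) + 1))
  calc ∑ m ∈ range (M + 1), 1 / ((rf (m + 1) k : ℝ) * (rf (M - m + 1) l : ℝ))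
      ≤ ∑ m ∈ range (M + 1), (f m + f (M - m)) := by
        refine sum_le_sum fun m _ ↦ ?_
        simpa only [rf_eq_ascFactorial, f] using
          one_div_ascFactorial_mul_ascFactorial_le (a := m + 1) (b := M - m + 1) (by omega)
            (by omega) hkl
    _ = ∑ m ∈ range (M + 1), f m + ∑ m ∈ range (M + 1), f m := by
        rw [sum_add_distrib, ← sum_range_reflect f (M + 1), add_tsub_cancel_right]
    _ ≤ 2 := by linarith [sum_range_one_div_mul_add_one_le_one (M + 1)]

theorem gammaSum_le {n s : ℕ} (hs : 2 ≤ s) : gammaSum n s ≤ 2 ^ (s + 1) :=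
  calc gammaSum n s ≤ ∑ k ∈ range (s + 1), (s.choose k : ℝ) * 2 :=
        sum_le_sum fun k hk ↦ mul_le_mul_of_nonneg_left
          (sum_range_one_div_rf_mul_rf_le_two (by have := mem_range_succ_iff.1 hk; omega))
          (Nat.cast_nonneg _)
    _ = 2 ^ (s + 1) := by
        rw [← sum_mul, ← Nat.cast_sum, Nat.sum_range_choose]
        push_cast
        ring

theorem sum_Icc_one_div_rf_le_gammaSum (n s : ℕ) :
    ∑ j ∈ Icc 1 (n - s + 1), 1 / (rf j s : ℝ) ≤ gammaSum n s := by
  have hreindex : ∑ j ∈ Icc 1 (n - s + 1), 1 / (rf j s : ℝ) =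
      (s.choose s : ℝ) * ∑ m ∈ range (n - s + 1),
        1 / ((rf (m + 1) s : ℝ) * (rf (n - s - m + 1) (s - s) : ℝ)) := by
    rw [← Ico_add_one_right_eq_Icc, sum_Ico_eq_sum_range]
    simp [rf_eq_ascFactorial, add_comm]
  rw [hreindex]
  exact single_le_sum (f := fun k ↦ (s.choose k : ℝ) * ∑ m ∈ range (n - s + 1),
      1 / ((rf (m + 1) k : ℝ) * (rf (n - s - m + 1) (s - k) : ℝ)))
    (fun k _ ↦ by positivity) (self_mem_range_succ s)

theorem inv_factorial_le_gammaSum (n s : ℕ) : 1 / (s.factorial : ℝ) ≤ gammaSum n s := by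
  refine le_trans ?_ (sum_Icc_one_div_rf_le_gammaSum n s)
  simpa [rf_eq_ascFactorial] using
    single_le_sum (f := fun j ↦ 1 / (rf j s : ℝ)) (fun j _ ↦ by positivity)
      (left_mem_Icc.2 (by omega) : 1 ∈ Icc 1 (n - s + 1))

/-- For fixed `s ≥ 2`, the variance factor under leverage sampling is `Θ(n^{s−1})`,
with the explicit lower bound
`Γ ≥ ((n+1)(n−s+1)_s/(n−s+1)²) ∑_{j=1}^{n−s+1} 1/(j)_s` for every `n ≥ s`. -/
theorem gamma_shapley_leverage_theta (s : ℕ) (hs : 2 ≤ s) :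
    (∃ c C : ℝ, 0 < c ∧ 0 < C ∧ ∃ N₀ : ℕ, ∀ n : ℕ, N₀ ≤ n → s ≤ n →
      ∀ S : Finset (Fin n), S.card = s →
        c * (n : ℝ) ^ (s - 1) ≤ GammaShap n s S
          ∧ GammaShap n s S ≤ C * (n : ℝ) ^ (s - 1)) ∧
    (∀ n : ℕ, s ≤ n → ∀ S : Finset (Fin n), S.card = s →
      (((n + 1 : ℕ) : ℝ) * (rf (n - s + 1) s : ℝ) / ((n - s + 1 : ℕ) : ℝ) ^ 2)
          * ∑ j ∈ Finset.Icc 1 (n - s + 1), 1 / (rf j s : ℝ)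
        ≤ GammaShap n s S) := by
  refine ⟨⟨1 / (2 ^ (s - 2) * s.factorial), 2 ^ (s + 4), by positivity, by positivity, 2 * s,
    fun n hn hsn S hS ↦ ⟨?_, ?_⟩⟩, fun n hsn S hS ↦ ?_⟩
  · rw [gammaShap_eq hsn hS]
    calc 1 / (2 ^ (s - 2) * (s.factorial : ℝ)) * (n : ℝ) ^ (s - 1)
        = (n : ℝ) ^ (s - 1) / 2 ^ (s - 2) * (1 / s.factorial) := by ring
      _ ≤ gammaScale n s * gammaSum n s :=
        mul_le_mul (le_gammaScale hs hn) (inv_factorial_le_gammaSum n s) (by positivity)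
          (gammaScale_nonneg n s)
  · rw [gammaShap_eq hsn hS]
    calc gammaScale n s * gammaSum n s ≤ 8 * (n : ℝ) ^ (s - 1) * 2 ^ (s + 1) :=
          mul_le_mul (gammaScale_le (by omega) hn) (gammaSum_le hs)
            ((inv_factorial_le_gammaSum n s).trans' (by positivity)) (by positivity)
      _ = 2 ^ (s + 4) * (n : ℝ) ^ (s - 1) := by ring
  · rw [gammaShap_eq hsn hS]
    exact mul_le_mul_of_nonneg_left (sum_Icc_one_div_rf_le_gammaSum n s) (gammaScale_nonneg n s)
end

section
/- Let N = {1,…,n}, S ⊆ N with s := |S|, let the Banzhaf interaction weights be p_t^s(n) := 1/2^{n−s} (constant in t), and let leverage sampling be P(T) := 1/((n+1) · C(n, |T|)). Then the variance factor satisfies the exact identity Γ_S(P) := ∑_{T ⊆ N} (p^s_{|T|−|S∩T|}(n))² / P(T) = (n+1) · C(2n, n) / 4^{n−s}. Moreover, for fixed s, Γ_S(P) = Θ(4^s · √n) as n → ∞. -/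
open Finset

/-- Banzhaf interaction weight `p_t^s(n) = 1/2^{n−s}` (constant in `t`). -/
noncomputable def banW (n s t : ℕ) : ℝ := 1 / 2 ^ (n - s)

/-- Variance factor of the MSR estimator for the Banzhaf interaction index
under leverage sampling. -/
noncomputable def GammaBan (n s : ℕ) (S : Finset (Fin n)) : ℝ :=
  ∑ T : Finset (Fin n), (banW n s (T.card - (S ∩ T).card)) ^ 2 / lev n T

/-! Since the Banzhaf weight is constant, each summand of `GammaBan` equals
`(n+1) C(n,|T|) / 4^(n-s)`; grouping the subsets `T` by size turns `∑_T C(n,|T|)` into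
`∑_k C(n,k)^2 = C(2n,n)`. For the asymptotics, the recurrence
`(n+1) C(2n+2,n+1) = 2(2n+1) C(2n,n)` gives by induction the Wallis-type bounds
`16^n / (4n) ≤ C(2n,n)^2 ≤ 16^n / (3n+1)`, so `(n+1) C(2n,n) / 4^n` lies between `√n / 2`
and `2 √n`. -/

lemma banW_sq_div_lev (n s t : ℕ) (T : Finset (Fin n)) :
    banW n s t ^ 2 / lev n T = ((n : ℝ) + 1) * n.choose T.card / 4 ^ (n - s) := by
  rw [banW, lev, div_pow, ← pow_mul, mul_comm, pow_mul]
  push_cast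
  field_simp
  ring

lemma sum_choose_card_univ (n : ℕ) :
    ∑ T : Finset (Fin n), (n.choose T.card : ℝ) = (2 * n).choose n := by
  rw [← powerset_univ, sum_powerset_apply_card (fun k ↦ (n.choose k : ℝ)), card_univ,
    Fintype.card_fin, ← Nat.sum_range_choose_sq]
  push_cast
  simp only [nsmul_eq_mul, sq]

lemma GammaBan_eq (n s : ℕ) (S : Finset (Fin n)) :
    GammaBan n s S = ((n : ℝ) + 1) * (2 * n).choose n / 4 ^ (n - s) := by
  simp only [GammaBan, banW_sq_div_lev, ← sum_div, ← mul_sum, sum_choose_card_univ]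

lemma GammaBan_eq_four_pow_mul {n s : ℕ} (hs : s ≤ n) (S : Finset (Fin n)) :
    GammaBan n s S = 4 ^ s * (((n : ℝ) + 1) * n.centralBinom / 4 ^ n) := by
  rw [GammaBan_eq, Nat.centralBinom_eq_two_mul_choose, ← Nat.sub_add_cancel hs, pow_add,
    Nat.add_sub_cancel]
  field_simp

namespace Nat

lemma four_pow_sq_le_four_mul_mul_centralBinom_sq {n : ℕ} (hn : 0 < n) :
    (4 ^ n) ^ 2 ≤ 4 * n * n.centralBinom ^ 2 := by
  induction n, hn using Nat.le_induction with
  | base => decide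
  | succ n hn ih =>
    refine Nat.le_of_mul_le_mul_left ?_ (succ_pos n)
    calc (n + 1) * (4 ^ (n + 1)) ^ 2 = 16 * (n + 1) * (4 ^ n) ^ 2 := by ring
      _ ≤ 16 * (n + 1) * (4 * n * n.centralBinom ^ 2) := by gcongr
      _ ≤ 4 * (2 * (2 * n + 1) * n.centralBinom) ^ 2 := by
        have : 4 * n * (n + 1) ≤ (2 * n + 1) ^ 2 := by nlinarith
        nlinarith
      _ = (n + 1) * (4 * (n + 1) * (n + 1).centralBinom ^ 2) := by
        rw [← succ_mul_centralBinom_succ]; ring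

lemma three_mul_add_one_mul_centralBinom_sq_le (n : ℕ) :
    (3 * n + 1) * n.centralBinom ^ 2 ≤ (4 ^ n) ^ 2 := by
  induction n with
  | zero => decide
  | succ n ih =>
    refine Nat.le_of_mul_le_mul_left ?_ (by positivity : 0 < (n + 1) ^ 2)
    calc (n + 1) ^ 2 * ((3 * (n + 1) + 1) * (n + 1).centralBinom ^ 2)
        = (3 * n + 4) * (2 * (2 * n + 1) * n.centralBinom) ^ 2 := by
          rw [← succ_mul_centralBinom_succ]; ring
      _ ≤ 16 * (n + 1) ^ 2 * ((3 * n + 1) * n.centralBinom ^ 2) := by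
        have : (3 * n + 4) * (2 * n + 1) ^ 2 ≤ 4 * (n + 1) ^ 2 * (3 * n + 1) := by nlinarith
        nlinarith
      _ ≤ 16 * (n + 1) ^ 2 * (4 ^ n) ^ 2 := by gcongr
      _ = (n + 1) ^ 2 * (4 ^ (n + 1)) ^ 2 := by ring

lemma mul_four_pow_sq_le_four_mul_succ_sq_mul_centralBinom_sq (n : ℕ) :
    n * (4 ^ n) ^ 2 ≤ 4 * ((n + 1) * n.centralBinom) ^ 2 := by
  rcases n.eq_zero_or_pos with rfl | hn
  · simp
  calc n * (4 ^ n) ^ 2 ≤ n * (4 * n * n.centralBinom ^ 2) :=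
        Nat.mul_le_mul_left n (four_pow_sq_le_four_mul_mul_centralBinom_sq hn)
    _ ≤ 4 * ((n + 1) * n.centralBinom) ^ 2 := by
        have : n * n ≤ (n + 1) ^ 2 := by nlinarith
        nlinarith

lemma succ_sq_mul_centralBinom_sq_le {n : ℕ} (hn : 0 < n) :
    ((n + 1) * n.centralBinom) ^ 2 ≤ 4 * n * (4 ^ n) ^ 2 := by
  calc ((n + 1) * n.centralBinom) ^ 2 ≤ 4 * n * ((3 * n + 1) * n.centralBinom ^ 2) := by
        have : (n + 1) ^ 2 ≤ 4 * n * (3 * n + 1) := by nlinarith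
        nlinarith
    _ ≤ 4 * n * (4 ^ n) ^ 2 := Nat.mul_le_mul_left _ (three_mul_add_one_mul_centralBinom_sq_le n)

end Nat

lemma sqrt_le_two_mul_succ_mul_centralBinom_div (n : ℕ) :
    √n ≤ 2 * (((n : ℝ) + 1) * n.centralBinom / 4 ^ n) := by
  have h : (n : ℝ) * (4 ^ n) ^ 2 ≤ 4 * (((n : ℝ) + 1) * n.centralBinom) ^ 2 := by
    exact_mod_cast Nat.mul_four_pow_sq_le_four_mul_succ_sq_mul_centralBinom_sq n
  rw [mul_div_assoc', le_div_iff₀ (by positivity)]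
  refine (pow_le_pow_iff_left₀ (by positivity) (by positivity) two_ne_zero).mp ?_
  rw [mul_pow √(n : ℝ), Real.sq_sqrt n.cast_nonneg]
  linarith

lemma succ_mul_centralBinom_div_le_two_mul_sqrt {n : ℕ} (hn : 0 < n) :
    ((n : ℝ) + 1) * n.centralBinom / 4 ^ n ≤ 2 * √n := by
  have h : (((n : ℝ) + 1) * n.centralBinom) ^ 2 ≤ 4 * n * (4 ^ n) ^ 2 := by
    exact_mod_cast Nat.succ_sq_mul_centralBinom_sq_le hn
  rw [div_le_iff₀ (by positivity)]
  refine (pow_le_pow_iff_left₀ (by positivity) (by positivity) two_ne_zero).mp ?_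
  rw [mul_assoc, mul_pow 2, mul_pow √(n : ℝ), Real.sq_sqrt n.cast_nonneg]
  linarith

/-- For Banzhaf interaction weights under leverage sampling, the variance factor
satisfies the exact identity `Γ_S(P) = (n+1) C(2n, n) / 4^{n−s}`, and for fixed
`s` it is `Θ(4^s √n)` as `n → ∞`. -/
theorem gamma_banzhaf_leverage :
    (∀ (n : ℕ) (S : Finset (Fin n)),
        GammaBan n S.card S
          = ((n : ℝ) + 1) * (Nat.choose (2 * n) n : ℝ) / 4 ^ (n - S.card)) ∧
    (∀ s : ℕ, ∃ c C : ℝ, 0 < c ∧ 0 < C ∧ ∃ N₀ : ℕ, ∀ n : ℕ, N₀ ≤ n →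
      ∀ S : Finset (Fin n), S.card = s →
        c * ((4 : ℝ) ^ s * Real.sqrt n) ≤ GammaBan n s S
          ∧ GammaBan n s S ≤ C * ((4 : ℝ) ^ s * Real.sqrt n)) := by
  refine ⟨fun n S ↦ GammaBan_eq n S.card S, fun s ↦ ⟨1 / 2, 2, by norm_num, by norm_num, 1, ?_⟩⟩
  rintro n hn S rfl
  have hs : S.card ≤ n := by simpa using S.card_le_univ
  have h4s : (0 : ℝ) ≤ 4 ^ S.card := by positivity
  have hlo := mul_le_mul_of_nonneg_left (sqrt_le_two_mul_succ_mul_centralBinom_div n) h4s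
  have hhi := mul_le_mul_of_nonneg_left (succ_mul_centralBinom_div_le_two_mul_sqrt hn) h4s
  rw [GammaBan_eq_four_pow_mul hs]
  constructor <;> linarith
end

section
/- Let ℓ, r, u, s be natural numbers with u ≤ ℓ, s ≥ 1, and u + r ≥ 1. For the Chaining Möbius weights q_t^s(n) := s/t, the leaf weight λ(ℓ, r, u, s) := ∑_{i=0}^{ℓ−u} (−1)^{i+u} · C(ℓ−u, i) · s/(i + u + r) satisfies the closed form λ(ℓ, r, u, s) = s · (−1)^u · B(u + r, ℓ − u + 1), where B(z₁, z₂) := ∫₀¹ x^{z₁−1}(1−x)^{z₂−1} dx is the Beta function; equivalently, λ(ℓ, r, u, s) = s · (−1)^u · (u+r−1)! · (ℓ−u)! / (ℓ+r)!. -/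
open Finset

/-- Leaf weight for the Chaining Möbius weights `q_t^s = s/t`:
`λ(ℓ, r, u, s) = ∑_{i=0}^{ℓ−u} (−1)^{i+u} C(ℓ−u, i) · s/(i+u+r)`. -/
noncomputable def lamChain (ℓ r u s : ℕ) : ℝ :=
  ∑ i ∈ Finset.range (ℓ - u + 1),
    (-1 : ℝ) ^ (i + u) * (Nat.choose (ℓ - u) i : ℝ)
      * ((s : ℝ) / ((i + u + r : ℕ) : ℝ))

/-- The alternating sum `∑_{i=0}^m (-1)^i C(m,i)/(k+i) = (k-1)! m! / (k+m)!`. -/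
lemma sumS (m : ℕ) : ∀ k : ℕ, 1 ≤ k →
    ∑ i ∈ Finset.range (m + 1),
      (-1 : ℝ) ^ i * (Nat.choose m i : ℝ) / ((k + i : ℕ) : ℝ)
    = (Nat.factorial (k - 1) : ℝ) * (Nat.factorial m : ℝ)
        / (Nat.factorial (k + m) : ℝ) := by
  induction m with
  | zero =>
    intro k hk
    obtain ⟨k, rfl⟩ := Nat.exists_eq_add_of_le hk
    have h1 : ((k : ℝ) + 1) ≠ 0 := by positivity
    have h2 : (Nat.factorial k : ℝ) ≠ 0 := by
      exact_mod_cast Nat.factorial_ne_zero k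
    simp [Nat.factorial_succ, Nat.add_comm 1 k]
    field_simp
  | succ m ih =>
    intro k hk
    obtain ⟨k, rfl⟩ := Nat.exists_eq_add_of_le hk
    have key : ∑ i ∈ Finset.range (m + 2),
        (-1 : ℝ) ^ i * (Nat.choose (m + 1) i : ℝ) / ((1 + k + i : ℕ) : ℝ)
        = (∑ i ∈ Finset.range (m + 1),
            (-1 : ℝ) ^ i * (Nat.choose m i : ℝ) / ((1 + k + i : ℕ) : ℝ))
          - ∑ i ∈ Finset.range (m + 1),
            (-1 : ℝ) ^ i * (Nat.choose m i : ℝ) / ((1 + k + 1 + i : ℕ) : ℝ) := by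
      rw [Finset.sum_range_succ' (fun i => (-1 : ℝ) ^ i * (Nat.choose (m + 1) i : ℝ) / ((1 + k + i : ℕ) : ℝ))]
      have expand : ∀ i ∈ Finset.range (m + 1),
          (-1 : ℝ) ^ (i + 1) * (Nat.choose (m + 1) (i + 1) : ℝ) / ((1 + k + (i + 1) : ℕ) : ℝ)
          = (-1 : ℝ) ^ (i + 1) * (Nat.choose m (i + 1) : ℝ) / ((1 + k + (i + 1) : ℕ) : ℝ)
            - (-1 : ℝ) ^ i * (Nat.choose m i : ℝ) / ((1 + k + 1 + i : ℕ) : ℝ) := by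
        intro i _
        rw [Nat.choose_succ_succ]
        simp only [Nat.succ_eq_add_one]
        push_cast
        ring
      rw [Finset.sum_congr rfl expand, Finset.sum_sub_distrib]
      have recomb : (∑ i ∈ Finset.range (m + 1),
          (-1 : ℝ) ^ (i + 1) * (Nat.choose m (i + 1) : ℝ) / ((1 + k + (i + 1) : ℕ) : ℝ))
          + (-1 : ℝ) ^ 0 * (Nat.choose (m + 1) 0 : ℝ) / ((1 + k + 0 : ℕ) : ℝ)
          = ∑ i ∈ Finset.range (m + 1),
            (-1 : ℝ) ^ i * (Nat.choose m i : ℝ) / ((1 + k + i : ℕ) : ℝ) := by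
        have := Finset.sum_range_succ' (fun i => (-1 : ℝ) ^ i * (Nat.choose m i : ℝ) / ((1 + k + i : ℕ) : ℝ)) (m + 1)
        rw [Finset.sum_range_succ] at this
        simp only [Nat.choose_succ_self, Nat.cast_zero, mul_zero, zero_mul, zero_div,
          add_zero, Nat.add_zero, Nat.choose_zero_right, Nat.cast_one] at this ⊢
        linarith [this]
      linarith [recomb]
    rw [key, ih (1 + k) (by omega), ih (1 + k + 1) (by omega)]
    have e1 : 1 + k - 1 = k := by omega
    have e2 : 1 + k + 1 - 1 = k + 1 := by omega
    have e3 : 1 + k + 1 + m = (1 + k + m) + 1 := by omega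
    have e4 : 1 + k + (m + 1) = (1 + k + m) + 1 := by omega
    rw [e1, e2, e3, e4, Nat.factorial_succ (1 + k + m), Nat.factorial_succ k,
      Nat.factorial_succ m]
    have h1 : (Nat.factorial (1 + k + m) : ℝ) ≠ 0 := by
      exact_mod_cast Nat.factorial_ne_zero _
    have h2 : ((1 + k + m : ℕ) + 1 : ℝ) ≠ 0 := by positivity
    push_cast
    field_simp
    ring

lemma integral_eq_sum (m k : ℕ) (hk : 1 ≤ k) :
    (∫ x in (0 : ℝ)..1, x ^ (k - 1) * (1 - x) ^ m)
    = ∑ i ∈ Finset.range (m + 1),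
      (-1 : ℝ) ^ i * (Nat.choose m i : ℝ) / ((k + i : ℕ) : ℝ) := by
  have expand : ∀ x : ℝ, x ^ (k - 1) * (1 - x) ^ m
      = ∑ i ∈ Finset.range (m + 1),
          (-1 : ℝ) ^ i * (Nat.choose m i : ℝ) * x ^ (k - 1 + i) := by
    intro x
    have : (1 - x) ^ m = (-x + 1) ^ m := by ring_nf
    rw [this, add_pow]
    rw [Finset.mul_sum]
    refine Finset.sum_congr rfl fun i _ => ?_
    rw [neg_pow, pow_add]
    ring
  calc (∫ x in (0 : ℝ)..1, x ^ (k - 1) * (1 - x) ^ m)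
      = ∫ x in (0 : ℝ)..1, ∑ i ∈ Finset.range (m + 1),
          (-1 : ℝ) ^ i * (Nat.choose m i : ℝ) * x ^ (k - 1 + i) := by
        exact intervalIntegral.integral_congr fun x _ => expand x
    _ = ∑ i ∈ Finset.range (m + 1), ∫ x in (0 : ℝ)..1,
          (-1 : ℝ) ^ i * (Nat.choose m i : ℝ) * x ^ (k - 1 + i) := by
        refine intervalIntegral.integral_finset_sum fun i _ => ?_
        exact Continuous.intervalIntegrable (by continuity) _ _
    _ = ∑ i ∈ Finset.range (m + 1),
          (-1 : ℝ) ^ i * (Nat.choose m i : ℝ) / ((k + i : ℕ) : ℝ) := by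
        refine Finset.sum_congr rfl fun i _ => ?_
        rw [intervalIntegral.integral_const_mul, integral_pow,
          zero_pow (by omega : k - 1 + i + 1 ≠ 0)]
        have h1 : ((k - 1 : ℕ) : ℝ) = (k : ℝ) - 1 := by
          have := Nat.cast_sub hk (R := ℝ); simpa using this
        push_cast [h1]
        have h2 : (k : ℝ) - 1 + (i : ℝ) + 1 = (k : ℝ) + i := by ring
        rw [h2]
        ring

/-- Closed form of the Chaining leaf weight:
`λ(ℓ,r,u,s) = s (−1)^u B(u+r, ℓ−u+1)` with the Beta function expressed as its
integral representation; equivalently `s (−1)^u (u+r−1)! (ℓ−u)! / (ℓ+r)!`. -/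
theorem chaining_leaf_weight_closed_form (ℓ r u s : ℕ)
    (huℓ : u ≤ ℓ) (hs : 1 ≤ s) (hur : 1 ≤ u + r) :
    lamChain ℓ r u s
        = (s : ℝ) * (-1 : ℝ) ^ u
            * ∫ x in (0 : ℝ)..1, x ^ (u + r - 1) * (1 - x) ^ (ℓ - u)
      ∧ lamChain ℓ r u s
        = (s : ℝ) * (-1 : ℝ) ^ u * (Nat.factorial (u + r - 1) : ℝ)
            * (Nat.factorial (ℓ - u) : ℝ) / (Nat.factorial (ℓ + r) : ℝ) := by
  have hlam : lamChain ℓ r u s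
      = (s : ℝ) * (-1 : ℝ) ^ u * ∑ i ∈ Finset.range (ℓ - u + 1),
          (-1 : ℝ) ^ i * (Nat.choose (ℓ - u) i : ℝ) / ((u + r + i : ℕ) : ℝ) := by
    unfold lamChain
    rw [Finset.mul_sum]
    refine Finset.sum_congr rfl fun i _ => ?_
    have : (i + u + r : ℕ) = (u + r + i : ℕ) := by omega
    rw [this, pow_add]
    ring
  have hfact : ℓ + r = (u + r) + (ℓ - u) := by omega
  constructor
  · rw [hlam, integral_eq_sum (ℓ - u) (u + r) hur]
  · rw [hlam, sumS (ℓ - u) (u + r) hur, hfact]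
    ring
end

section
/- Let N = {1,…,n}, fix a maximal order k, and define the Faithful Shapley Interaction Index of a game ν at S ⊆ N with s := |S| ≤ k as φ^FSII_S(ν) := m_S(ν) + (−1)^{k−s} · (s/(k+s)) · C(k, s) · ∑_{T ⊇ S, |T| > k} ( C(|T|−1, k) / C(|T|+k−1, k+s) ) · m_T(ν). Let ν_tree(T) := ∑_{j ∈ 𝓛} c_j · 1[R_j ⊆ T ⊆ N \ L_j] be a tree-based proxy with disjoint L_j, R_j ⊆ N. Then φ^FSII_S(ν_tree) = ∑_{j ∈ 𝓛 : S ⊆ L_j ∪ R_j} c_j · ( (−1)^{|S ∩ L_j|} · 1[R_j ⊆ S] + ∑_{i = max(0, k−r−u+1)}^{ℓ−u} (−1)^{u+i+k−s} · (s/(k+s)) · C(k, s) · C(ℓ−u, i) · C(r+i+u−1, k) / C(r+u+i+k−1, k+s) ), where for each leaf j we write ℓ := |L_j|, r := |R_j|, u := |S ∩ L_j|. -/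
/-!
The FSII is linear in the game, so it suffices to treat a single leaf, i.e. the indicator of the
interval `[R, N \ L]`. Since the alternating sum `∑_{Q ∈ [A, B]} (-1)^{|B \ Q|}` vanishes unless
`A = B`, the Möbius transform of this indicator is `(-1)^{|T ∩ L|}` on the interval `[R, R ∪ L]`
and zero elsewhere. Hence the only `T ⊇ S` contributing to the FSII correction term are those in
`[S ∪ R, R ∪ L]`; there the summand depends on `|T|` alone, and writing `|T| = r + u + i` there are
`C(ℓ - u, i)` such sets for each `i`.
-/

open Finset

/-- Faithful Shapley Interaction Index of maximal order `k`:
`φ^FSII_S(ν) = m_S(ν) + (−1)^{k−s} (s/(k+s)) C(k, s)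
  ∑_{T ⊇ S, |T| > k} (C(|T|−1, k)/C(|T|+k−1, k+s)) m_T(ν)`. -/
noncomputable def fsii {n : ℕ} (k : ℕ) (ν : Finset (Fin n) → ℝ) (S : Finset (Fin n)) : ℝ :=
  moebius ν S + (-1 : ℝ) ^ (k - S.card)
      * ((S.card : ℝ) / ((k : ℝ) + S.card)) * (Nat.choose k S.card : ℝ) *
    ∑ T ∈ univ.filter (fun T => S ⊆ T ∧ k < T.card),
      ((Nat.choose (T.card - 1) k : ℝ) / (Nat.choose (T.card + k - 1) (k + S.card) : ℝ))
        * moebius ν T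

theorem Finset.sum_Icc_apply_card {α M : Type*} [DecidableEq α] [AddCommMonoid M] (f : ℕ → M)
    {s t : Finset α} (h : s ⊆ t) :
    ∑ u ∈ Icc s t, f #u = ∑ i ∈ range (#t - #s + 1), (#t - #s).choose i • f (#s + i) := by
  have hdisj : ∀ a ∈ (t \ s).powerset, Disjoint s a := fun a ha =>
    disjoint_of_subset_right (mem_powerset.mp ha) disjoint_sdiff
  rw [Icc_eq_image_powerset h, sum_image fun a ha b hb hab => by
    rw [← union_sdiff_cancel_left (hdisj a ha), ← union_sdiff_cancel_left (hdisj b hb)]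
    exact congrArg (· \ s) hab]
  rw [sum_congr rfl fun a ha => by rw [card_union_of_disjoint (hdisj a ha)],
    sum_powerset_apply_card (fun m => f (#s + m)), card_sdiff_of_subset h]

theorem Finset.sum_Icc_neg_one_pow_card_sdiff {α R : Type*} [DecidableEq α] [CommRing R]
    (s t : Finset α) : ∑ u ∈ Icc s t, (-1 : R) ^ #(t \ u) = if s = t then 1 else 0 := by
  by_cases hst : s ⊆ t
  · calc ∑ u ∈ Icc s t, (-1 : R) ^ #(t \ u) = ∑ u ∈ Icc s t, (-1 : R) ^ (#t - #u) :=
          sum_congr rfl fun u hu => by rw [card_sdiff_of_subset (mem_Icc.mp hu).2]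
      _ = ∑ i ∈ range (#t - #s + 1), (1 : R) ^ i * (-1) ^ (#t - #s - i) * (#t - #s).choose i := by
          rw [sum_Icc_apply_card (fun m => (-1 : R) ^ (#t - m)) hst]
          refine sum_congr rfl fun i _ => ?_
          rw [nsmul_eq_mul, one_pow, one_mul, mul_comm, Nat.sub_sub]
      _ = 0 ^ (#t - #s) := by rw [← add_pow, add_neg_cancel]
      _ = if s = t then 1 else 0 := by
          rw [zero_pow_eq]
          refine if_congr ⟨fun h => eq_of_subset_of_card_le hst (by omega), ?_⟩ rfl rfl
          rintro rfl; simp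
  · rw [Icc_eq_empty hst, sum_empty, if_neg (by rintro rfl; exact hst subset_rfl)]

theorem Finset.eq_sdiff_iff_subset_and_subset_union {α : Type*} [DecidableEq α]
    {L R T : Finset α} (hd : Disjoint L R) : R = T \ L ↔ R ⊆ T ∧ T ⊆ R ∪ L := by
  rw [subset_antisymm_iff, subset_sdiff, sdiff_le_iff']
  simp [hd.symm]

theorem Finset.card_inter_eq_card_sub_card {α : Type*} [DecidableEq α] {L R T : Finset α}
    (hd : Disjoint L R) (hRT : R ⊆ T) (hTRL : T ⊆ R ∪ L) : #(T ∩ L) = #T - #R := by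
  rw [(eq_sdiff_iff_subset_and_subset_union hd).mpr ⟨hRT, hTRL⟩]
  have := card_sdiff_add_card_inter T L
  omega

section

variable {n : ℕ}

theorem moebius_sum_mul {ι : Type*} (s : Finset ι) (c : ι → ℝ) (ν : ι → Finset (Fin n) → ℝ)
    (T : Finset (Fin n)) :
    moebius (fun Q => ∑ j ∈ s, c j * ν j Q) T = ∑ j ∈ s, c j * moebius (ν j) T := by
  simp only [moebius, mul_sum]
  rw [sum_comm]
  exact sum_congr rfl fun j _ => sum_congr rfl fun Q _ => by ring

theorem fsii_sum_mul {ι : Type*} (s : Finset ι) (c : ι → ℝ) (ν : ι → Finset (Fin n) → ℝ)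
    (k : ℕ) (S : Finset (Fin n)) :
    fsii k (fun Q => ∑ j ∈ s, c j * ν j Q) S = ∑ j ∈ s, c j * fsii k (ν j) S := by
  simp only [fsii, moebius_sum_mul, mul_sum, mul_add]
  rw [sum_comm (s := univ.filter _), ← sum_add_distrib]
  exact sum_congr rfl fun j _ => congrArg _ (sum_congr rfl fun T _ => by ring)

def leafGame (R L : Finset (Fin n)) (Q : Finset (Fin n)) : ℝ :=
  if R ⊆ Q ∧ Q ⊆ univ \ L then 1 else 0

theorem moebius_leafGame {L R : Finset (Fin n)} (hd : Disjoint L R) (T : Finset (Fin n)) :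
    moebius (leafGame R L) T = if R ⊆ T ∧ T ⊆ R ∪ L then (-1) ^ #(T ∩ L) else 0 := by
  have hsupport : {Q ∈ T.powerset | R ⊆ Q ∧ Q ⊆ univ \ L} = Icc R (T \ L) := by
    ext Q
    simp only [mem_filter, mem_powerset, mem_Icc, subset_sdiff, subset_univ, true_and]
    tauto
  have hcard : ∀ Q ∈ Icc R (T \ L), #T - #Q = #(T ∩ L) + #((T \ L) \ Q) := fun Q hQ => by
    have := card_sdiff_add_card_inter T L
    have := card_sdiff_of_subset (mem_Icc.mp hQ).2
    have := card_le_card (mem_Icc.mp hQ).2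
    omega
  calc moebius (leafGame R L) T = ∑ Q ∈ Icc R (T \ L), (-1 : ℝ) ^ (#T - #Q) := by
        simp only [moebius, leafGame, mul_ite, mul_one, mul_zero]
        rw [← sum_filter, hsupport]
    _ = (-1) ^ #(T ∩ L) * ∑ Q ∈ Icc R (T \ L), (-1 : ℝ) ^ #((T \ L) \ Q) := by
        rw [mul_sum]; exact sum_congr rfl fun Q hQ => by rw [hcard Q hQ, pow_add]
    _ = _ := by
        simp only [sum_Icc_neg_one_pow_card_sdiff, eq_sdiff_iff_subset_and_subset_union hd,
          mul_ite, mul_one, mul_zero]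

theorem sum_superset_mul_moebius_leafGame {L R S : Finset (Fin n)} (hd : Disjoint L R)
    (hS : S ⊆ L ∪ R) (k : ℕ) (w : ℕ → ℝ) :
    ∑ T ∈ univ.filter (fun T => S ⊆ T ∧ k < #T), w #T * moebius (leafGame R L) T
      = ∑ i ∈ Icc (k + 1 - (#R + #(S ∩ L))) (#L - #(S ∩ L)),
          ((#L - #(S ∩ L)).choose i : ℝ) * (w (#R + #(S ∩ L) + i) * (-1) ^ (#(S ∩ L) + i)) := by
  set u := #(S ∩ L)
  set g : ℕ → ℝ := fun m => if k < m then w m * (-1) ^ (m - #R) else 0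
  have hSR : #(S ∪ R) = #R + u := by
    rw [← card_union_of_disjoint (hd.symm.mono_right inter_subset_right)]
    congr 1
    grind
  have hRL : #(R ∪ L) = #R + #L := card_union_of_disjoint hd.symm
  calc ∑ T ∈ univ.filter (fun T => S ⊆ T ∧ k < #T), w #T * moebius (leafGame R L) T
        = ∑ T ∈ Icc (S ∪ R) (R ∪ L), g #T := by
        rw [sum_filter, ← univ_inter (Icc _ _), ← sum_ite_mem]
        refine sum_congr rfl fun T _ => ?_
        simp only [moebius_leafGame hd, mem_Icc, union_subset_iff, g]
        split_ifs <;> simp_all [card_inter_eq_card_sub_card hd]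
    _ = ∑ i ∈ range (#L - u + 1), (#L - u).choose i • g (#R + u + i) := by
        rw [sum_Icc_apply_card g (union_subset (hS.trans (union_comm L R).subset) subset_union_left),
          hSR, hRL, Nat.add_sub_add_left]
    _ = _ := by
        simp only [g, nsmul_eq_mul, mul_ite, mul_zero]
        rw [← sum_filter]
        refine sum_congr (by ext i; simp only [mem_filter, mem_range, mem_Icc]; omega) fun i _ => ?_
        rw [Nat.add_assoc, Nat.add_sub_cancel_left]

theorem fsii_leafGame {L R : Finset (Fin n)} (hd : Disjoint L R) (k : ℕ) (S : Finset (Fin n)) :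
    fsii k (leafGame R L) S = if S ⊆ L ∪ R then
      (-1 : ℝ) ^ #(S ∩ L) * (if R ⊆ S then 1 else 0)
        + ∑ i ∈ Icc (k + 1 - (#R + #(S ∩ L))) (#L - #(S ∩ L)),
            (-1 : ℝ) ^ (#(S ∩ L) + i + (k - #S)) * ((#S : ℝ) / ((k : ℝ) + #S))
              * (Nat.choose k #S : ℝ) * (Nat.choose (#L - #(S ∩ L)) i : ℝ)
              * (Nat.choose (#R + i + #(S ∩ L) - 1) k : ℝ)
              / (Nat.choose (#R + #(S ∩ L) + i + k - 1) (k + #S) : ℝ)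
      else 0 := by
  have hSRL : S ⊆ L ∪ R ↔ S ⊆ R ∪ L := by rw [union_comm]
  rw [fsii, moebius_leafGame hd]
  by_cases hS : S ⊆ L ∪ R
  · have tail := sum_superset_mul_moebius_leafGame hd hS k
      (fun t => ((t - 1).choose k : ℝ) / ((t + k - 1).choose (k + #S) : ℝ))
    rw [if_pos hS, tail, mul_sum, mul_ite, mul_one, mul_zero]
    congr 1
    · exact if_congr (and_iff_left (hSRL.mp hS)) rfl rfl
    refine sum_congr rfl fun i _ => ?_
    rw [Nat.add_right_comm #R i, pow_add]
    ring
  · rw [if_neg hS, if_neg fun h => hS (hSRL.mpr h.2), sum_eq_zero, mul_zero, add_zero]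
    intro T hT
    rw [moebius_leafGame hd, if_neg fun h => hS (hSRL.mpr ((mem_filter.mp hT).2.1.trans h.2)),
      mul_zero]

end

theorem fsii_tree_extraction_general {n k : ℕ} {ι : Type*} [Fintype ι]
    (c : ι → ℝ) (L R : ι → Finset (Fin n))
    (hdisj : ∀ j, Disjoint (L j) (R j))
    (νtree : Finset (Fin n) → ℝ)
    (hν : ∀ T, νtree T = ∑ j, c j * (if R j ⊆ T ∧ T ⊆ univ \ L j then (1 : ℝ) else 0))
    (S : Finset (Fin n)) :
    fsii k νtree S
      = ∑ j ∈ univ.filter (fun j => S ⊆ L j ∪ R j),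
          c j * ((-1 : ℝ) ^ (S ∩ L j).card * (if R j ⊆ S then (1 : ℝ) else 0)
            + ∑ i ∈ Finset.Icc (k + 1 - ((R j).card + (S ∩ L j).card))
                  ((L j).card - (S ∩ L j).card),
                (-1 : ℝ) ^ ((S ∩ L j).card + i + (k - S.card))
                  * ((S.card : ℝ) / ((k : ℝ) + S.card)) * (Nat.choose k S.card : ℝ)
                  * (Nat.choose ((L j).card - (S ∩ L j).card) i : ℝ)
                  * (Nat.choose ((R j).card + i + (S ∩ L j).card - 1) k : ℝ)
                  / (Nat.choose ((R j).card + (S ∩ L j).card + i + k - 1)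
                      (k + S.card) : ℝ)) := by
  have hleaves : νtree = fun T => ∑ j, c j * leafGame (R j) (L j) T := funext hν
  rw [hleaves, fsii_sum_mul, sum_filter]
  exact sum_congr rfl fun j _ => by rw [fsii_leafGame (hdisj j), mul_ite, mul_zero]

/-- Exact extraction of the Faithful Shapley Interaction Index from a tree-based
proxy: leaf-wise closed form with `ℓ = |L_j|`, `r = |R_j|`, `u = |S ∩ L_j|`,
`s = |S|`, summing `i` from `max(0, k−r−u+1)` to `ℓ−u`. -/
theorem fsii_tree_extraction {n k : ℕ} {ι : Type*} [Fintype ι]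
    (c : ι → ℝ) (L R : ι → Finset (Fin n))
    (hdisj : ∀ j, Disjoint (L j) (R j))
    (νtree : Finset (Fin n) → ℝ)
    (hν : ∀ T, νtree T = ∑ j, c j * (if R j ⊆ T ∧ T ⊆ univ \ L j then (1 : ℝ) else 0))
    (S : Finset (Fin n)) (hSk : S.card ≤ k) :
    fsii k νtree S
      = ∑ j ∈ univ.filter (fun j => S ⊆ L j ∪ R j),
          c j * ((-1 : ℝ) ^ (S ∩ L j).card * (if R j ⊆ S then (1 : ℝ) else 0)
            + ∑ i ∈ Finset.Icc (k + 1 - ((R j).card + (S ∩ L j).card))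
                  ((L j).card - (S ∩ L j).card),
                (-1 : ℝ) ^ ((S ∩ L j).card + i + (k - S.card))
                  * ((S.card : ℝ) / ((k : ℝ) + S.card)) * (Nat.choose k S.card : ℝ)
                  * (Nat.choose ((L j).card - (S ∩ L j).card) i : ℝ)
                  * (Nat.choose ((R j).card + i + (S ∩ L j).card - 1) k : ℝ)
                  / (Nat.choose ((R j).card + (S ∩ L j).card + i + k - 1)
                      (k + S.card) : ℝ)) :=
  fsii_tree_extraction_general c L R hdisj νtree hν S
end
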